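/- arXiv:2601.16542 — 7 statements merged into one kernel-verified Lean document; each statement's English description precedes it below -/
import Mathlib

section
/- Let θ ∈ [0,1]. Define e₊ = (1/√2)·( ((1−θ)/√(1+θ²))·e^{−iπ/4} , ((1+θ)/√(1+θ²))·e^{iπ/4} ) ∈ ℂ² and e₋ = (1/√2)·( ((1+θ)/√(1+θ²))·e^{iπ/4} , ((1−θ)/√(1+θ²))·e^{−iπ/4} ) ∈ ℂ². Then e₊ and e₋ form an orthonormal basis of ℂ² for the Hermitian inner product ⟨u,v⟩ = u₁·conj(v₁) + u₂·conj(v₂), and both e₊ and e₋ belong to Γ_θ, i.e. there exist τ₊, τ₋ ∈ ℂ with e₊ = (τ₊ + iθ·conj(τ₊), conj(τ₊) + iθ·τ₊) and e₋ = (τ₋ + iθ·conj(τ₋), conj(τ₋) + iθ·τ₋). -/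
/-!
Parametrise `Γ_θ` by `τ ↦ (τ + iθτ̄, τ̄ + iθτ)`. For two such points the Hermitian product is
`(1 + θ²)(τσ̄ + τ̄σ)` and the determinant is `(1 + θ²)(τσ̄ - τ̄σ)`. Since `e^{±iπ/4} = (1 ± i)/√2`,
`e₊` and `e₋` are the points with parameters `r(1 - i)` and `r(1 + i)`, where `r = 1/(2√(1+θ²))`;
for these `τσ̄` is purely imaginary and `4(1 + θ²)r² = 1`, which gives orthonormality, and the
nonzero determinant gives spanning.
-/

open Complex ComplexConjugate

/-- The point of `Γ_θ` with parameter `τ`. -/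
def contourPoint (θ : ℝ) (τ : ℂ) : ℂ × ℂ :=
  (τ + I * θ * conj τ, conj τ + I * θ * τ)

theorem contourPoint_inner (θ : ℝ) (τ σ : ℂ) :
    (contourPoint θ τ).1 * conj (contourPoint θ σ).1 +
        (contourPoint θ τ).2 * conj (contourPoint θ σ).2 =
      (1 + θ ^ 2) * (τ * conj σ + conj τ * σ) := by
  simp only [contourPoint, map_add, map_mul, conj_I, conj_ofReal, conj_conj]
  linear_combination (-(θ : ℂ) ^ 2) * (τ * conj σ + conj τ * σ) * I_sq

theorem contourPoint_det (θ : ℝ) (τ σ : ℂ) :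
    (contourPoint θ τ).1 * (contourPoint θ σ).2 - (contourPoint θ σ).1 * (contourPoint θ τ).2 =
      (1 + θ ^ 2) * (τ * conj σ - conj τ * σ) := by
  simp only [contourPoint]
  linear_combination (θ : ℂ) ^ 2 * (conj τ * σ - τ * conj σ) * I_sq

theorem contourPoint_real_mul_one_sub_I (θ r : ℝ) :
    contourPoint θ (r * (1 - I)) = (r * (1 - θ) * (1 - I), r * (1 + θ) * (1 + I)) := by
  simp only [contourPoint, map_mul, map_sub, map_one, conj_I, conj_ofReal, Prod.mk.injEq]
  constructor
  · linear_combination (r * θ : ℂ) * I_sq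
  · linear_combination (-(r * θ : ℂ)) * I_sq

theorem contourPoint_real_mul_one_add_I (θ r : ℝ) :
    contourPoint θ (r * (1 + I)) = (r * (1 + θ) * (1 + I), r * (1 - θ) * (1 - I)) := by
  simp only [contourPoint, map_mul, map_add, map_one, conj_I, conj_ofReal, Prod.mk.injEq]
  constructor
  · linear_combination (-(r * θ : ℂ)) * I_sq
  · linear_combination (r * θ : ℂ) * I_sq

theorem exists_eq_smul_add_smul_of_det_ne_zero {K : Type*} [Field K] (u w : K × K)
    (hdet : u.1 * w.2 - w.1 * u.2 ≠ 0) (v : K × K) :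
    ∃ a b : K, v = (a * u.1 + b * w.1, a * u.2 + b * w.2) := by
  refine ⟨(v.1 * w.2 - w.1 * v.2) / (u.1 * w.2 - w.1 * u.2),
    (u.1 * v.2 - v.1 * u.2) / (u.1 * w.2 - w.1 * u.2), Prod.ext ?_ ?_⟩ <;>
  · dsimp only
    rw [div_mul_eq_mul_div, div_mul_eq_mul_div, ← add_div, eq_div_iff hdet]
    ring

theorem exp_pi_div_four_mul_I : exp (Real.pi / 4 * I) = (√2 / 2 : ℝ) * (1 + I) := by
  rw [← ofReal_ofNat, ← ofReal_div, exp_mul_I, ← ofReal_cos, ← ofReal_sin,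
    Real.cos_pi_div_four, Real.sin_pi_div_four]
  ring

theorem exp_neg_pi_div_four_mul_I : exp (-(Real.pi / 4) * I) = (√2 / 2 : ℝ) * (1 - I) := by
  rw [← ofReal_ofNat, ← ofReal_div, ← ofReal_neg, exp_mul_I, ← ofReal_cos, ← ofReal_sin,
    Real.cos_neg, Real.sin_neg, Real.cos_pi_div_four, Real.sin_pi_div_four]
  push_cast
  ring

theorem stmt0_general (θ : ℝ)
    (ep em : ℂ × ℂ)
    (hep : ep = ((((1/Real.sqrt 2) * ((1-θ)/Real.sqrt (1+θ^2)) : ℝ) : ℂ)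
                    * Complex.exp (-(Real.pi/4) * Complex.I),
                 (((1/Real.sqrt 2) * ((1+θ)/Real.sqrt (1+θ^2)) : ℝ) : ℂ)
                    * Complex.exp ((Real.pi/4) * Complex.I)))
    (hem : em = ((((1/Real.sqrt 2) * ((1+θ)/Real.sqrt (1+θ^2)) : ℝ) : ℂ)
                    * Complex.exp ((Real.pi/4) * Complex.I),
                 (((1/Real.sqrt 2) * ((1-θ)/Real.sqrt (1+θ^2)) : ℝ) : ℂ)
                    * Complex.exp (-(Real.pi/4) * Complex.I))) :
    ep.1 * conj ep.1 + ep.2 * conj ep.2 = 1 ∧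
    em.1 * conj em.1 + em.2 * conj em.2 = 1 ∧
    ep.1 * conj em.1 + ep.2 * conj em.2 = 0 ∧
    (∀ v : ℂ × ℂ, ∃ a b : ℂ, v = (a * ep.1 + b * em.1, a * ep.2 + b * em.2)) ∧
    (∃ τ : ℂ, ep = (τ + Complex.I * θ * conj τ, conj τ + Complex.I * θ * τ)) ∧
    (∃ τ : ℂ, em = (τ + Complex.I * θ * conj τ, conj τ + Complex.I * θ * τ)) := by
  have hsqrt_two : (√2 : ℂ) ≠ 0 := ofReal_ne_zero.mpr (by positivity)
  have hρ : (√(1 + θ ^ 2) : ℂ) ≠ 0 := ofReal_ne_zero.mpr (by positivity)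
  have hρ_sq : (√(1 + θ ^ 2) : ℂ) ^ 2 = 1 + θ ^ 2 := by
    exact_mod_cast Real.sq_sqrt (by positivity : (0 : ℝ) ≤ 1 + θ ^ 2)
  obtain ⟨r, hr⟩ : ∃ r : ℝ, r = 1 / (2 * √(1 + θ ^ 2)) := ⟨_, rfl⟩
  have hr_sq : (1 + θ ^ 2) * (r : ℂ) ^ 2 = 1 / 4 := by
    rw [hr]; push_cast; field_simp; rw [hρ_sq]; ring
  obtain rfl : ep = contourPoint θ (r * (1 - I)) := by
    rw [hep, contourPoint_real_mul_one_sub_I, exp_neg_pi_div_four_mul_I, exp_pi_div_four_mul_I, hr]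
    congr 1 <;> push_cast <;> field_simp
  obtain rfl : em = contourPoint θ (r * (1 + I)) := by
    rw [hem, contourPoint_real_mul_one_add_I, exp_neg_pi_div_four_mul_I, exp_pi_div_four_mul_I, hr]
    congr 1 <;> push_cast <;> field_simp
  simp only [contourPoint_inner, map_mul, map_sub, map_add, map_one, conj_ofReal, conj_I]
  refine ⟨?_, ?_, ?_, exists_eq_smul_add_smul_of_det_ne_zero _ _ ?_, ⟨_, rfl⟩, ⟨_, rfl⟩⟩
  · linear_combination 4 * hr_sq - 2 * (1 + θ ^ 2) * r ^ 2 * I_sq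
  · linear_combination 4 * hr_sq - 2 * (1 + θ ^ 2) * r ^ 2 * I_sq
  · linear_combination 2 * (1 + θ ^ 2) * r ^ 2 * I_sq
  · rw [contourPoint_det]
    simp only [map_mul, map_sub, map_add, map_one, conj_ofReal, conj_I]
    refine ne_of_eq_of_ne ?_ (neg_ne_zero.mpr I_ne_zero)
    linear_combination (-4 * I) * hr_sq

/-- For θ ∈ [0,1], the vectors e₊, e₋ form an orthonormal basis of ℂ²
(for the Hermitian inner product ⟨u,v⟩ = u₁·conj v₁ + u₂·conj v₂) and both belong to
the contour Γ_θ = {(τ + iθ·conj τ, conj τ + iθ·τ) : τ ∈ ℂ}. -/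
theorem stmt0 (θ : ℝ) (hθ : θ ∈ Set.Icc (0:ℝ) 1)
    (ep em : ℂ × ℂ)
    (hep : ep = ((((1/Real.sqrt 2) * ((1-θ)/Real.sqrt (1+θ^2)) : ℝ) : ℂ)
                    * Complex.exp (-(Real.pi/4) * Complex.I),
                 (((1/Real.sqrt 2) * ((1+θ)/Real.sqrt (1+θ^2)) : ℝ) : ℂ)
                    * Complex.exp ((Real.pi/4) * Complex.I)))
    (hem : em = ((((1/Real.sqrt 2) * ((1+θ)/Real.sqrt (1+θ^2)) : ℝ) : ℂ)
                    * Complex.exp ((Real.pi/4) * Complex.I),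
                 (((1/Real.sqrt 2) * ((1-θ)/Real.sqrt (1+θ^2)) : ℝ) : ℂ)
                    * Complex.exp (-(Real.pi/4) * Complex.I))) :
    ep.1 * conj ep.1 + ep.2 * conj ep.2 = 1 ∧
    em.1 * conj em.1 + em.2 * conj em.2 = 1 ∧
    ep.1 * conj em.1 + ep.2 * conj em.2 = 0 ∧
    (∀ v : ℂ × ℂ, ∃ a b : ℂ, v = (a * ep.1 + b * em.1, a * ep.2 + b * em.2)) ∧
    (∃ τ : ℂ, ep = (τ + Complex.I * θ * conj τ, conj τ + Complex.I * θ * τ)) ∧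
    (∃ τ : ℂ, em = (τ + Complex.I * θ * conj τ, conj τ + Complex.I * θ * τ)) :=
  stmt0_general θ ep em hep hem
end

section
/- For every M > 0 there exists C > 0 such that for all δ ∈ (0,1] and all z₊, z₋ ∈ [−M, M], the Lebesgue integral ∬_{[−M,M]×[−M,M]} ( |z₊ − δ·w₊| + |z₋ − w₋| )^{−1} dw₊ dw₋ is finite and bounded by C·(1 + |log(|z₊| + δ)|). -/
/-!
Integrating first in `w₋`, with `a = |z₊ - δ w₊|` one gets
`∫ (a + |z₋ - w₋|)⁻¹ dw₋ ≤ 2 log (4M / a)`, so the double integral is at most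
`4M log (4M) - 2 ∫ log |z₊ - δ w₊| dw₊`. After the substitution `u = z₊ - δ w₊` the last
integral is `2M` times the mean of `log |u|` over the interval of radius `r = δM` around
`z₊`, and that mean is at least `log (|z₊| + r) - 3`: pointwise when `|z₊| ≥ 2r`, and
otherwise by comparing with the explicit value `6r (log (3r) - 1)` of the integral over
`[-3r, 3r]`, on which `log |u| ≤ log (3r)`. Finally
`log (|z₊| + δM) ≥ log (|z₊| + δ) + log (min 1 M)`.
-/

open MeasureTheory Set Real intervalIntegral

theorem integral_log_neg_to_self (R : ℝ) : ∫ u in (-R)..R, log u = 2 * R * log R - 2 * R := by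
  rw [integral_log, log_neg_eq_log]
  ring

-- `Real.log u = log |u|`, so this bounds the mean of `log |u|` over `[c - r, c + r]`.
theorem mul_log_sub_three_le_integral_log (c : ℝ) {r : ℝ} (hr : 0 < r) :
    2 * r * (log (|c| + r) - 3) ≤ ∫ u in (c - r)..(c + r), log u := by
  rcases le_or_gt (2 * r) |c| with hfar | hnear
  · have hpt : ∀ u ∈ Icc (c - r) (c + r), log (|c| + r) - 3 ≤ log u := by
      intro u hu
      have hu : (|c| + r) / 3 ≤ |u| := by
        rcases abs_cases c with ⟨hc, _⟩ | ⟨hc, _⟩ <;>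
          rcases abs_cases u with ⟨hu', _⟩ | ⟨hu', _⟩ <;> linarith [hu.1, hu.2]
      have hlog3 : log 3 ≤ 3 := by linarith [log_le_sub_one_of_pos (by norm_num : (0:ℝ) < 3)]
      calc log (|c| + r) - 3 ≤ log (|c| + r) - log 3 := by linarith
        _ = log ((|c| + r) / 3) := (log_div (by positivity) (by norm_num)).symm
        _ ≤ log |u| := log_le_log (by positivity) hu
        _ = log u := log_abs u
    calc 2 * r * (log (|c| + r) - 3) = ∫ _ in (c - r)..(c + r), (log (|c| + r) - 3) := by
          rw [intervalIntegral.integral_const, smul_eq_mul]; ring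
      _ ≤ _ := integral_mono_on (by linarith) intervalIntegrable_const intervalIntegrable_log' hpt
  · have hnonneg : 0 ≤ᵐ[volume.restrict (Ioc (-(3 * r)) (3 * r))]
        fun u => log (3 * r) - log u := by
      filter_upwards [ae_restrict_mem measurableSet_Ioc,
        ae_restrict_of_ae (volume.ae_ne 0)] with u hu hu0
      rw [Pi.zero_apply, sub_nonneg, ← log_abs u]
      exact log_le_log (abs_pos.mpr hu0) (abs_le.mpr ⟨hu.1.le, hu.2⟩)
    have hmono := integral_mono_interval (a := c - r) (b := c + r) (by linarith [neg_abs_le c])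
      (by linarith) (by linarith [le_abs_self c]) hnonneg
      (intervalIntegrable_const.sub intervalIntegrable_log')
    rw [integral_sub intervalIntegrable_const intervalIntegrable_log',
      integral_sub intervalIntegrable_const intervalIntegrable_log',
      intervalIntegral.integral_const, intervalIntegral.integral_const, integral_log_neg_to_self,
      smul_eq_mul, smul_eq_mul] at hmono
    have hlog : 2 * r * log (|c| + r) ≤ 2 * r * log (3 * r) :=
      mul_le_mul_of_nonneg_left (log_le_log (by positivity) (by linarith)) (by positivity)
    linarith

theorem mul_log_sub_three_le_integral_log_sub_mul (c : ℝ) {δ M : ℝ} (hδ : 0 < δ)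
    (hM : 0 < M) :
    2 * M * (log (|c| + δ * M) - 3) ≤ ∫ w in (-M)..M, log (c - δ * w) := by
  rw [integral_comp_sub_mul _ hδ.ne', smul_eq_mul, mul_neg, sub_neg_eq_add,
    le_inv_mul_iff₀ hδ]
  exact (mul_log_sub_three_le_integral_log c (mul_pos hδ hM)).trans_eq' (by ring)

theorem intervalIntegrable_log_sub_mul (c δ a b : ℝ) :
    IntervalIntegrable (fun w => log (c - δ * w)) volume a b := by
  rcases eq_or_ne δ 0 with rfl | hδ
  · simp
  have h := ((intervalIntegrable_log' (a := c - δ * a) (b := c - δ * b)).comp_sub_left c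
    ).comp_mul_left (c := δ)
  simpa only [sub_sub_cancel, mul_div_cancel_left₀ _ hδ] using h

theorem integral_zero_to_inv_add_abs {a L : ℝ} (ha : 0 < a) (hL : 0 ≤ L) :
    ∫ s in (0:ℝ)..L, (a + |s|)⁻¹ = log ((a + L) / a) := by
  rw [integral_congr (g := fun s => (a + s)⁻¹) fun s hs => by
      rw [uIcc_of_le hL] at hs; simp only [abs_of_nonneg hs.1],
    integral_comp_add_left (fun x => x⁻¹), add_zero, integral_inv_of_pos ha (by linarith)]

theorem integral_inv_add_abs_sub_Icc {a p q z : ℝ} (ha : 0 < a) (hz : z ∈ Icc p q) :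
    ∫ t in Icc p q, (a + |z - t|)⁻¹ = log ((a + (q - z)) / a) + log ((a + (z - p)) / a) := by
  have hcont : Continuous fun s : ℝ => (a + |s|)⁻¹ :=
    (continuous_const.add continuous_abs).inv₀ fun s =>
      (add_pos_of_pos_of_nonneg ha (abs_nonneg s)).ne'
  rw [integral_Icc_eq_integral_Ioc, ← integral_of_le (hz.1.trans hz.2),
    integral_comp_sub_left (fun s => (a + |s|)⁻¹) z,
    ← integral_add_adjacent_intervals (b := 0) (hcont.intervalIntegrable _ _)
      (hcont.intervalIntegrable _ _),
    integral_zero_to_inv_add_abs ha (by linarith [hz.1])]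
  have hneg := integral_comp_neg (a := 0) (b := q - z) (fun s => (a + |s|)⁻¹)
  simp only [abs_neg, neg_zero, neg_sub] at hneg
  rw [← hneg, integral_zero_to_inv_add_abs ha (by linarith [hz.2])]

theorem integral_inv_add_abs_sub_le {M a z : ℝ} (ha : 0 < a) (haM : a ≤ 2 * M)
    (hz : z ∈ Icc (-M) M) :
    ∫ t in Icc (-M) M, (a + |z - t|)⁻¹ ≤ 2 * (log (4 * M) - log a) := by
  have hlog : ∀ x, 0 ≤ x → x ≤ 2 * M → log ((a + x) / a) ≤ log (4 * M) - log a :=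
    fun x hx₀ hx => by
      rw [← log_div (by linarith) ha.ne']
      exact log_le_log (by positivity) (div_le_div_of_nonneg_right (by linarith) ha.le)
  rw [integral_inv_add_abs_sub_Icc ha hz]
  linarith [hlog (M - z) (by linarith [hz.2]) (by linarith [hz.1]),
    hlog (z - -M) (by linarith [hz.1]) (by linarith [hz.2])]

theorem integrable_prod_and_integral_le_of_nonneg {α β : Type*} [MeasurableSpace α]
    [MeasurableSpace β] {μ : Measure α} {ν : Measure β} [SFinite μ] [SFinite ν]
    {f : α × β → ℝ} {g : α → ℝ} (hf₀ : 0 ≤ f) (hf : AEStronglyMeasurable f (μ.prod ν))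
    (hg : Integrable g μ)
    (hfg : ∀ᵐ x ∂μ, Integrable (fun y => f (x, y)) ν ∧ ∫ y, f (x, y) ∂ν ≤ g x) :
    Integrable f (μ.prod ν) ∧ ∫ z, f z ∂μ.prod ν ≤ ∫ x, g x ∂μ := by
  have hnorm : ∀ x, ∫ y, ‖f (x, y)‖ ∂ν = ∫ y, f (x, y) ∂ν := fun x =>
    integral_congr_ae (.of_forall fun y => Real.norm_of_nonneg (hf₀ _))
  have hint : Integrable f (μ.prod ν) := by
    refine (integrable_prod_iff hf).mpr ⟨hfg.mono fun x hx => hx.1, ?_⟩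
    refine hg.mono' hf.norm.integral_prod_right' (hfg.mono fun x hx => ?_)
    rw [hnorm, Real.norm_of_nonneg (integral_nonneg fun y => hf₀ (x, y))]
    exact hx.2
  refine ⟨hint, ?_⟩
  rw [integral_prod f hint]
  exact integral_mono_ae hint.integral_prod_left hg (hfg.mono fun x hx => hx.2)

theorem ae_integrableOn_and_integral_inv_abs_add_abs_le {M δ zp zm : ℝ} (hδ : δ ∈ Ioc 0 1)
    (hzp : zp ∈ Icc (-M) M) (hzm : zm ∈ Icc (-M) M) :
    ∀ᵐ w₁ ∂volume.restrict (Icc (-M) M),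
      IntegrableOn (fun w₂ => (|zp - δ * w₁| + |zm - w₂|)⁻¹) (Icc (-M) M) ∧
      ∫ w₂ in Icc (-M) M, (|zp - δ * w₁| + |zm - w₂|)⁻¹
        ≤ 2 * (log (4 * M) - log (zp - δ * w₁)) := by
  filter_upwards [ae_restrict_mem measurableSet_Icc, ae_restrict_of_ae (volume.ae_ne (zp / δ))]
    with w₁ hw₁ hne
  have ha : 0 < |zp - δ * w₁| := abs_pos.mpr fun h => hne (by field_simp [hδ.1.ne']; linarith)
  have haM : |zp - δ * w₁| ≤ 2 * M :=
    calc |zp - δ * w₁| ≤ |zp| + δ * |w₁| :=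
          (abs_sub zp (δ * w₁)).trans_eq (by rw [abs_mul, abs_of_pos hδ.1])
      _ ≤ M + 1 * M := add_le_add (abs_le.mpr hzp)
          (mul_le_mul hδ.2 (abs_le.mpr hw₁) (abs_nonneg _) zero_le_one)
      _ = 2 * M := by ring
  refine ⟨Continuous.integrableOn_Icc ((continuous_const.add
    (continuous_const.sub continuous_id).abs).inv₀ fun _ =>
      (add_pos_of_pos_of_nonneg ha (abs_nonneg _)).ne'), ?_⟩
  simpa only [log_abs] using integral_inv_add_abs_sub_le ha haM hzm

theorem log_min_one_add_log_le_log_add_mul {x δ M : ℝ} (hx : 0 ≤ x) (hδ : 0 < δ)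
    (hM : 0 < M) :
    log (min 1 M) + log (x + δ) ≤ log (x + δ * M) := by
  rw [← log_mul (by positivity) (by positivity)]
  refine log_le_log (by positivity) ?_
  nlinarith [min_le_left 1 M, min_le_right 1 M]

theorem setIntegral_log_four_mul_sub_log_sub_mul_le (c : ℝ) {M δ : ℝ} (hM : 0 < M)
    (hδ : 0 < δ) :
    ∫ w in Icc (-M) M, 2 * (log (4 * M) - log (c - δ * w))
      ≤ 4 * M * (log (4 * M) - log (min 1 M) + 3 + |log (|c| + δ)|) := by
  rw [integral_Icc_eq_integral_Ioc, ← integral_of_le (by linarith),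
    intervalIntegral.integral_const_mul,
    integral_sub intervalIntegrable_const (intervalIntegrable_log_sub_mul c δ (-M) M),
    intervalIntegral.integral_const, smul_eq_mul]
  have hlog : log (min 1 M) - |log (|c| + δ)| ≤ log (|c| + δ * M) := by
    linarith [log_min_one_add_log_le_log_add_mul (abs_nonneg c) hδ hM,
      neg_abs_le (log (|c| + δ))]
  nlinarith [mul_log_sub_three_le_integral_log_sub_mul c hδ hM,
    mul_le_mul_of_nonneg_left hlog hM.le]

/-- For every M > 0 there is C > 0 such that for all δ ∈ (0,1] and
z₊, z₋ ∈ [−M,M], the integral ∬_{[−M,M]²} (|z₊ − δw₊| + |z₋ − w₋|)⁻¹ dw₊ dw₋ is finite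
and bounded by C·(1 + |log(|z₊| + δ)|). -/
theorem stmt9 : ∀ M : ℝ, 0 < M → ∃ C : ℝ, 0 < C ∧
    ∀ δ ∈ Set.Ioc (0:ℝ) 1, ∀ zp ∈ Set.Icc (-M) M, ∀ zm ∈ Set.Icc (-M) M,
      IntegrableOn (fun w : ℝ × ℝ => (|zp - δ * w.1| + |zm - w.2|)⁻¹)
        (Set.Icc (-M) M ×ˢ Set.Icc (-M) M) ∧
      (∫ w in Set.Icc (-M) M ×ˢ Set.Icc (-M) M,
          (|zp - δ * w.1| + |zm - w.2|)⁻¹)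
        ≤ C * (1 + |Real.log (|zp| + δ)|) := by
  intro M hM
  set K := log (4 * M) - log (min 1 M) + 3
  have hK : 3 ≤ K := by
    have := log_le_log (lt_min one_pos hM) ((min_le_right 1 M).trans (by linarith : M ≤ 4 * M))
    linarith
  refine ⟨4 * M * K, by positivity, ?_⟩
  intro δ hδ zp hzp zm hzm
  have hg : IntegrableOn (fun w => 2 * (log (4 * M) - log (zp - δ * w))) (Icc (-M) M) :=
    ((integrableOn_const (by simp)).sub ((intervalIntegrable_iff_integrableOn_Icc_of_le
      (by linarith)).mp (intervalIntegrable_log_sub_mul zp δ (-M) M))).const_mul 2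
  rw [IntegrableOn, Measure.volume_eq_prod, ← Measure.prod_restrict]
  obtain ⟨hint, hle⟩ := integrable_prod_and_integral_le_of_nonneg
    (f := fun w : ℝ × ℝ => (|zp - δ * w.1| + |zm - w.2|)⁻¹) (fun w => by positivity)
    (by fun_prop) hg (ae_integrableOn_and_integral_inv_abs_add_abs_le hδ hzp hzm)
  refine ⟨hint, ?_⟩
  calc _ ≤ _ := hle
    _ ≤ 4 * M * (K + K * |log (|zp| + δ)|) :=
        (setIntegral_log_four_mul_sub_log_sub_mul_le zp hM hδ.1).trans (mul_le_mul_of_nonneg_left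
          (by nlinarith [abs_nonneg (log (|zp| + δ))]) (by positivity))
    _ = 4 * M * K * (1 + |log (|zp| + δ)|) := by ring
end

section
/- Let g₁ : [0,∞) → ℝ be defined by g₁(t) = 1/(√(1+t²) + t) = √(1+t²) − t. Then for every k ∈ ℕ there exists C > 0 such that |g₁^{(k)}(t)| ≤ C·(1+t)^{−1−k} for all t ≥ 0, where g₁^{(k)} denotes the k-th derivative (one-sided at t = 0, or equivalently the derivative of the smooth extension t ↦ √(1+t²) − t of g₁ to all of ℝ). -/
/-!
Write `⟨t⟩ = √(1 + t²)`, so that `g₁ = ⟨t⟩ - t = 1 / (⟨t⟩ + t)` and `1 + t ≤ 2⟨t⟩`; it suffices to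
bound `g₁⁽ᵏ⁾` by `C ⟨t⟩^{-1-k}`. For `t ≥ 0` this is `g₁ ≤ 1/⟨t⟩` when `k = 0`, and then
`g₁' = -g₁/⟨t⟩` when `k = 1`. From `g₁'' = ⟨t⟩⁻³` on, since `⟨t⟩' = t/⟨t⟩`, differentiating
`p(t)/⟨t⟩ⁿ` gives `(p'(t)(1 + t²) - n t p(t))/⟨t⟩ⁿ⁺²`, so `g₁⁽ᵏ⁺²⁾ = q(t)/⟨t⟩^{2k+3}` with
`deg q ≤ k`, and `|q(t)| ≲ ⟨t⟩ᵏ`.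
-/

open Polynomial

noncomputable def japaneseBracket (t : ℝ) : ℝ := √(1 + t ^ 2)

namespace japaneseBracket

lemma pos (t : ℝ) : 0 < japaneseBracket t := Real.sqrt_pos.2 (by positivity)

lemma sq (t : ℝ) : japaneseBracket t ^ 2 = 1 + t ^ 2 := Real.sq_sqrt (by positivity)

lemma one_le (t : ℝ) : 1 ≤ japaneseBracket t := Real.one_le_sqrt.2 (by nlinarith)

lemma abs_le (t : ℝ) : |t| ≤ japaneseBracket t := Real.abs_le_sqrt (by linarith)

lemma one_add_le_two_mul (t : ℝ) : 1 + t ≤ 2 * japaneseBracket t := by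
  nlinarith [pos t, sq t, sq_nonneg (t - 1), sq_nonneg (2 * japaneseBracket t - 1 - t)]

lemma hasDerivAt (t : ℝ) : HasDerivAt japaneseBracket (t / japaneseBracket t) t := by
  have h := ((hasDerivAt_pow 2 t).const_add 1).sqrt (by positivity)
  convert h using 1
  · rfl
  · simp [japaneseBracket, mul_div_mul_left _ _ (two_ne_zero' ℝ)]

end japaneseBracket

lemma natDegree_derivative_mul_sub_le (p : ℝ[X]) (c : ℝ) :
    (derivative p * (1 + X ^ 2) - C c * X * p).natDegree ≤ p.natDegree + 1 := by
  refine (natDegree_sub_le _ _).trans (max_le ?_ ?_)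
  · rcases Nat.eq_zero_or_pos p.natDegree with hp | hp
    · simp [derivative_of_natDegree_zero hp]
    · have h1 := natDegree_derivative_le p
      have h2 : (1 + X ^ 2 : ℝ[X]).natDegree ≤ 2 := by compute_degree
      have := natDegree_mul_le (p := derivative p) (q := 1 + X ^ 2)
      omega
  · have h1 : (C c * X).natDegree ≤ 1 := (natDegree_C_mul_le _ _).trans_eq natDegree_X
    have := natDegree_mul_le (p := C c * X) (q := p)
    omega

lemma hasDerivAt_eval_div_japaneseBracket_pow (p : ℝ[X]) (n : ℕ) (t : ℝ) :
    HasDerivAt (fun x => p.eval x / japaneseBracket x ^ n)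
      ((derivative p * (1 + X ^ 2) - C (n : ℝ) * X * p).eval t / japaneseBracket t ^ (n + 2)) t := by
  have hb := japaneseBracket.pos t
  refine ((p.hasDerivAt t).div ((japaneseBracket.hasDerivAt t).pow n)
    (pow_pos hb n).ne').congr_deriv ?_
  rw [eval_sub, eval_mul, eval_mul, eval_mul, eval_add, eval_pow, eval_C, eval_X, eval_one,
    ← japaneseBracket.sq, Pi.pow_apply]
  rcases n with _ | m
  · field_simp
    ring
  · rw [Nat.add_sub_cancel]
    field_simp
    push_cast
    ring

lemma iteratedDeriv_eval_div_japaneseBracket_pow (p : ℝ[X]) (n k : ℕ) :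
    ∃ q : ℝ[X], q.natDegree ≤ p.natDegree + k ∧
      iteratedDeriv k (fun x => p.eval x / japaneseBracket x ^ n) =
        fun x => q.eval x / japaneseBracket x ^ (n + 2 * k) := by
  induction k with
  | zero => exact ⟨p, le_rfl, by simp⟩
  | succ k ih =>
    obtain ⟨q, hq, hk⟩ := ih
    refine ⟨derivative q * (1 + X ^ 2) - C ((n + 2 * k : ℕ) : ℝ) * X * q,
      (natDegree_derivative_mul_sub_le q _).trans (by omega), ?_⟩
    rw [iteratedDeriv_succ, hk, show n + 2 * (k + 1) = n + 2 * k + 2 by ring]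
    exact funext fun t => (hasDerivAt_eval_div_japaneseBracket_pow q _ t).deriv

lemma exists_abs_eval_le_mul_japaneseBracket_pow {p : ℝ[X]} {d : ℕ} (hp : p.natDegree ≤ d) :
    ∃ C, 0 < C ∧ ∀ t, |p.eval t| ≤ C * japaneseBracket t ^ d := by
  refine ⟨∑ i ∈ Finset.range (d + 1), |p.coeff i| + 1, by positivity, fun t => ?_⟩
  rw [eval_eq_sum_range' (Nat.lt_succ_of_le hp), add_mul, one_mul, Finset.sum_mul]
  refine (Finset.abs_sum_le_sum_abs _ _).trans (le_add_of_le_of_nonneg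
    (Finset.sum_le_sum fun i hi => ?_) (pow_pos (japaneseBracket.pos t) d).le)
  rw [abs_mul, abs_pow]
  gcongr
  calc |t| ^ i ≤ japaneseBracket t ^ i := by gcongr; exact japaneseBracket.abs_le t
    _ ≤ japaneseBracket t ^ d :=
      pow_le_pow_right₀ (japaneseBracket.one_le t) (Finset.mem_range_succ_iff.mp hi)

lemma abs_japaneseBracket_sub_self_le {t : ℝ} (ht : 0 ≤ t) :
    |japaneseBracket t - t| ≤ 1 / japaneseBracket t := by
  have hb := japaneseBracket.pos t
  have hsq := japaneseBracket.sq t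
  have hlt : t < japaneseBracket t := by nlinarith
  rw [abs_of_pos (sub_pos.2 hlt), le_div_iff₀ hb]
  nlinarith

lemma abs_div_japaneseBracket_sub_one_le {t : ℝ} (ht : 0 ≤ t) :
    |t / japaneseBracket t - 1| ≤ 1 / japaneseBracket t ^ 2 := by
  have hb := japaneseBracket.pos t
  rw [show t / japaneseBracket t - 1 = -(japaneseBracket t - t) / japaneseBracket t by
    field_simp; ring, abs_div, abs_neg, abs_of_pos hb, div_le_iff₀ hb, pow_two, ← div_div,
    div_mul_cancel₀ _ hb.ne']
  exact abs_japaneseBracket_sub_self_le ht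

lemma deriv_japaneseBracket_sub_id :
    deriv (fun x => japaneseBracket x - x) = fun x => x / japaneseBracket x - 1 :=
  funext fun t => ((japaneseBracket.hasDerivAt t).sub (hasDerivAt_id t)).deriv

lemma iteratedDeriv_add_two_japaneseBracket_sub_id (k : ℕ) :
    iteratedDeriv (k + 2) (fun x => japaneseBracket x - x) =
      iteratedDeriv k (fun x => (1 : ℝ[X]).eval x / japaneseBracket x ^ 3) := by
  have h := hasDerivAt_eval_div_japaneseBracket_pow X 1
  rw [show (derivative X * (1 + X ^ 2) - C ((1 : ℕ) : ℝ) * X * X : ℝ[X]) = 1 by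
    simp only [derivative_X, one_mul, Nat.cast_one, map_one]; ring] at h
  have hsecond : deriv (fun x => x / japaneseBracket x - 1) =
      fun x => (1 : ℝ[X]).eval x / japaneseBracket x ^ 3 := funext fun t => by
    simpa using ((h t).sub_const 1).deriv
  rw [iteratedDeriv_succ', iteratedDeriv_succ', deriv_japaneseBracket_sub_id, hsecond]

lemma exists_abs_iteratedDeriv_japaneseBracket_sub_id_le (k : ℕ) :
    ∃ C, 0 < C ∧ ∀ t, 0 ≤ t →
      |iteratedDeriv k (fun x => japaneseBracket x - x) t| ≤ C / japaneseBracket t ^ (k + 1) := by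
  match k with
  | 0 => exact ⟨1, one_pos, fun t ht => by simpa using abs_japaneseBracket_sub_self_le ht⟩
  | 1 => exact ⟨1, one_pos, fun t ht => by
      simpa [deriv_japaneseBracket_sub_id] using abs_div_japaneseBracket_sub_one_le ht⟩
  | k + 2 =>
    obtain ⟨q, hq, hderiv⟩ := iteratedDeriv_eval_div_japaneseBracket_pow 1 3 k
    obtain ⟨C, hC, hbound⟩ := exists_abs_eval_le_mul_japaneseBracket_pow hq
    refine ⟨C, hC, fun t _ => ?_⟩
    have hb := japaneseBracket.pos t
    rw [iteratedDeriv_add_two_japaneseBracket_sub_id, hderiv, abs_div, abs_of_pos (pow_pos hb _),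
      div_le_div_iff₀ (pow_pos hb _) (pow_pos hb _)]
    calc |q.eval t| * japaneseBracket t ^ (k + 2 + 1)
        ≤ C * japaneseBracket t ^ (natDegree 1 + k) * japaneseBracket t ^ (k + 2 + 1) := by
          gcongr; exact hbound t
      _ = C * japaneseBracket t ^ (3 + 2 * k) := by rw [natDegree_one]; ring

lemma div_japaneseBracket_pow_le {C t : ℝ} (hC : 0 ≤ C) (ht : 0 ≤ t) (n : ℕ) :
    C / japaneseBracket t ^ n ≤ 2 ^ n * C / (1 + t) ^ n := by
  have hb := japaneseBracket.pos t
  rw [div_le_div_iff₀ (pow_pos hb n) (by positivity), mul_comm (2 ^ n) C, mul_assoc, ← mul_pow]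
  gcongr
  exact japaneseBracket.one_add_le_two_mul t

/-- The function g₁(t) = √(1+t²) − t (smooth extension to ℝ of
1/(√(1+t²)+t)) satisfies, for every k ∈ ℕ, a bound
|g₁^{(k)}(t)| ≤ C·(1+t)^{−1−k} for all t ≥ 0. -/
theorem stmt11 :
    ∀ k : ℕ, ∃ C : ℝ, 0 < C ∧ ∀ t : ℝ, 0 ≤ t →
      |iteratedDeriv k (fun x : ℝ => Real.sqrt (1+x^2) - x) t| ≤ C / (1+t)^(k+1) := by
  intro k
  obtain ⟨C, hC, hbound⟩ := exists_abs_iteratedDeriv_japaneseBracket_sub_id_le k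
  exact ⟨2 ^ (k + 1) * C, by positivity, fun t ht =>
    (hbound t ht).trans (div_japaneseBracket_pow_le hC.le ht _)⟩
end

section
/- Let κ ∈ ℂ with κ ≠ 0, T ∈ ℝ, and let φ, b : [T,∞) → ℂ be infinitely differentiable with φ'(t) ≠ 0 for all t ≥ T. Define c₀ = b/(κ·φ'), c_{k+1} = −(c_k)'/(κ·φ'), and c^{(N)} = Σ_{k=0}^{N} c_k. Assume that e^{κ·φ(t)}·c^{(N)}(t) → 0 as t → ∞ and that the functions t ↦ b(t)·e^{κ·φ(t)} and t ↦ c_N'(t)·e^{κ·φ(t)} are Lebesgue integrable on [T,∞). Then ∫_T^∞ b(t)·e^{κ·φ(t)} dt = −e^{κ·φ(T)}·c^{(N)}(T) − ∫_T^∞ e^{κ·φ(t)}·c_N'(t) dt. -/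
open Complex MeasureTheory

/-- integration by parts formula for the tail integral: with
c₀ = b/(κφ'), c_{k+1} = −(c_k)'/(κφ'), c^{(N)} = Σ_{k≤N} c_k on [T,∞) (one-sided
derivatives at T), if e^{κφ}·c^{(N)} → 0 at ∞ and b·e^{κφ}, c_N'·e^{κφ} are
integrable on [T,∞), then
∫_T^∞ b e^{κφ} dt = −e^{κφ(T)} c^{(N)}(T) − ∫_T^∞ e^{κφ} c_N' dt. -/
theorem stmt14 (T : ℝ) (κ : ℂ) (hκ : κ ≠ 0)
    (φ b : ℝ → ℂ)
    (hφ : ContDiffOn ℝ (⊤ : ℕ∞) φ (Set.Ici T))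
    (hb : ContDiffOn ℝ (⊤ : ℕ∞) b (Set.Ici T))
    (hφ' : ∀ t ∈ Set.Ici T, derivWithin φ (Set.Ici T) t ≠ 0)
    (c : ℕ → ℝ → ℂ)
    (hc0 : ∀ t ∈ Set.Ici T, c 0 t = b t / (κ * derivWithin φ (Set.Ici T) t))
    (hcs : ∀ k : ℕ, ∀ t ∈ Set.Ici T,
      c (k+1) t = -(derivWithin (c k) (Set.Ici T) t) / (κ * derivWithin φ (Set.Ici T) t))
    (N : ℕ)
    (hlim : Filter.Tendsto
      (fun t => Complex.exp (κ * φ t) * ∑ k ∈ Finset.range (N+1), c k t)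
      Filter.atTop (nhds 0))
    (hint1 : IntegrableOn (fun t => b t * Complex.exp (κ * φ t)) (Set.Ici T))
    (hint2 : IntegrableOn
      (fun t => derivWithin (c N) (Set.Ici T) t * Complex.exp (κ * φ t)) (Set.Ici T)) :
    (∫ t in Set.Ici T, b t * Complex.exp (κ * φ t))
      = -Complex.exp (κ * φ T) * (∑ k ∈ Finset.range (N+1), c k T)
        - ∫ t in Set.Ici T, Complex.exp (κ * φ t) * derivWithin (c N) (Set.Ici T) t := by
  have hus : UniqueDiffOn ℝ (Set.Ici T) := uniqueDiffOn_Ici T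
  have hφ'cd : ContDiffOn ℝ (⊤ : ℕ∞) (derivWithin φ (Set.Ici T)) (Set.Ici T) :=
    hφ.derivWithin hus (by simp)
  -- smoothness of each c k on [T, ∞)
  have hck : ∀ k, ContDiffOn ℝ (⊤ : ℕ∞) (c k) (Set.Ici T) := by
    intro k
    induction k with
    | zero =>
      have h1 : ContDiffOn ℝ (⊤ : ℕ∞) (fun t => b t * (κ * derivWithin φ (Set.Ici T) t)⁻¹)
          (Set.Ici T) :=
        hb.mul ((contDiffOn_const.mul hφ'cd).inv (fun t ht => mul_ne_zero hκ (hφ' t ht)))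
      exact h1.congr (fun t ht => by rw [hc0 t ht, div_eq_mul_inv])
    | succ k ih =>
      have hd : ContDiffOn ℝ (⊤ : ℕ∞) (derivWithin (c k) (Set.Ici T)) (Set.Ici T) :=
        ih.derivWithin hus (by simp)
      have h1 : ContDiffOn ℝ (⊤ : ℕ∞)
          (fun t => -(derivWithin (c k) (Set.Ici T) t) *
            (κ * derivWithin φ (Set.Ici T) t)⁻¹) (Set.Ici T) :=
        hd.neg.mul ((contDiffOn_const.mul hφ'cd).inv (fun t ht => mul_ne_zero hκ (hφ' t ht)))
      exact h1.congr (fun t ht => by rw [hcs k t ht, div_eq_mul_inv])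
  set C : ℝ → ℂ := fun t => ∑ k ∈ Finset.range (N+1), c k t with hC_def
  have hCcd : ContDiffOn ℝ (⊤ : ℕ∞) C (Set.Ici T) := ContDiffOn.sum fun k _ => hck k
  -- the key derivative computation on (T, ∞)
  have key : ∀ t ∈ Set.Ioi T, HasDerivAt (fun u => Complex.exp (κ * φ u) * C u)
      (b t * Complex.exp (κ * φ t)
        + derivWithin (c N) (Set.Ici T) t * Complex.exp (κ * φ t)) t := by
    intro t ht
    have ht' : t ∈ Set.Ici T := Set.mem_Ici.mpr (le_of_lt ht)
    have hts : Set.Ici T ∈ nhds t := Ici_mem_nhds ht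
    have hφd : HasDerivAt φ (derivWithin φ (Set.Ici T) t) t :=
      ((hφ.differentiableOn (by simp) t ht').hasDerivWithinAt).hasDerivAt hts
    have hexp : HasDerivAt (fun u => Complex.exp (κ * φ u))
        (Complex.exp (κ * φ t) * (κ * derivWithin φ (Set.Ici T) t)) t :=
      (hφd.const_mul κ).cexp
    have hsum : HasDerivAt C
        (∑ k ∈ Finset.range (N+1), derivWithin (c k) (Set.Ici T) t) t :=
      by
        exact (HasDerivAt.sum (u := Finset.range (N+1)) fun k _ =>
          (((hck k).differentiableOn (by simp) t ht').hasDerivWithinAt).hasDerivAt hts).congr_of_eventuallyEq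
          (Filter.Eventually.of_forall fun u => by simp only [hC_def, Finset.sum_apply])
    have h2 := hexp.mul hsum
    have ha : κ * derivWithin φ (Set.Ici T) t ≠ 0 := mul_ne_zero hκ (hφ' t ht')
    have h0 : κ * derivWithin φ (Set.Ici T) t * c 0 t = b t := by
      rw [hc0 t ht']; field_simp; exact mul_div_cancel_left₀ _ (hφ' t ht')
    have hk : ∀ k, κ * derivWithin φ (Set.Ici T) t * c (k+1) t
        = -(derivWithin (c k) (Set.Ici T) t) := by
      intro k; rw [hcs k t ht']; field_simp; rw [mul_div_cancel_left₀ _ (hφ' t ht')]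
    have hC : κ * derivWithin φ (Set.Ici T) t * C t
        = b t - ∑ k ∈ Finset.range N, derivWithin (c k) (Set.Ici T) t := by
      simp only [hC_def, Finset.mul_sum]
      rw [Finset.sum_range_succ']
      simp only [hk, h0, Finset.sum_neg_distrib]
      ring
    refine h2.congr_deriv ?_
    rw [Finset.sum_range_succ, mul_assoc, hC]
    ring
  have hcont : ContinuousWithinAt (fun u => Complex.exp (κ * φ u) * C u) (Set.Ici T) T := by
    have : ContinuousOn (fun u => Complex.exp (κ * φ u) * C u) (Set.Ici T) :=
      ((Complex.continuous_exp.comp_continuousOn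
        (continuousOn_const.mul hφ.continuousOn)).mul hCcd.continuousOn)
    exact this T Set.self_mem_Ici
  have hint1' : IntegrableOn (fun t => b t * Complex.exp (κ * φ t)) (Set.Ioi T) :=
    hint1.mono_set Set.Ioi_subset_Ici_self
  have hint2' : IntegrableOn
      (fun t => derivWithin (c N) (Set.Ici T) t * Complex.exp (κ * φ t)) (Set.Ioi T) :=
    hint2.mono_set Set.Ioi_subset_Ici_self
  have hFTC := integral_Ioi_of_hasDerivAt_of_tendsto hcont key (hint1'.add hint2') hlim
  rw [MeasureTheory.integral_add hint1' hint2'] at hFTC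
  rw [MeasureTheory.integral_Ici_eq_integral_Ioi, MeasureTheory.integral_Ici_eq_integral_Ioi]
  have hcomm : (∫ t in Set.Ioi T,
        Complex.exp (κ * φ t) * derivWithin (c N) (Set.Ici T) t)
      = ∫ t in Set.Ioi T, derivWithin (c N) (Set.Ici T) t * Complex.exp (κ * φ t) := by
    simp_rw [mul_comm]
  rw [hcomm]
  linear_combination hFTC
end

section
/- Let 0 < t₀ < t₁ and let χ : [0,∞) → [0,1] be infinitely differentiable with χ(t) = 0 for t ∈ [0, t₀] and χ(t) = 1 for t ≥ t₁. Then there exist δ > 0 and a function g : (−δ, δ) → ℝ which is real-analytic, such that for every ε ∈ (0, δ): ∫₀^∞ e^{−ε²·t²/2} · χ(t)/t dt = log(1/ε) + g(ε). -/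
open MeasureTheory Complex Set Metric

set_option maxHeartbeats 1000000

lemma norm_cexp_sub_one_le (w : ℂ) : ‖Complex.exp w - 1‖ ≤ ‖w‖ * Real.exp ‖w‖ := by
  have hconv : Convex ℝ (Metric.closedBall (0:ℂ) ‖w‖) := convex_closedBall _ _
  have hd : ∀ z ∈ Metric.closedBall (0:ℂ) ‖w‖,
      HasDerivWithinAt Complex.exp (Complex.exp z) (Metric.closedBall (0:ℂ) ‖w‖) z :=
    fun z _ => (Complex.hasDerivAt_exp z).hasDerivWithinAt
  have hb : ∀ z ∈ Metric.closedBall (0:ℂ) ‖w‖, ‖Complex.exp z‖ ≤ Real.exp ‖w‖ := by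
    intro z hz
    rw [Complex.norm_exp]
    exact Real.exp_le_exp.2 ((Complex.re_le_norm z).trans (by simpa using hz))
  have h0 : (0:ℂ) ∈ Metric.closedBall (0:ℂ) ‖w‖ := Metric.mem_closedBall_self (norm_nonneg w)
  have hw : w ∈ Metric.closedBall (0:ℂ) ‖w‖ := by simp [Metric.mem_closedBall]
  have key := hconv.norm_image_sub_le_of_norm_hasDerivWithin_le hd hb h0 hw
  simpa [Complex.exp_zero, mul_comm] using key

lemma norm_cexp_quad (z : ℂ) (t : ℝ) :
    ‖Complex.exp (-(z^2*(t:ℂ)^2/2))‖ ≤ Real.exp (‖z‖^2*t^2/2) := by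
  rw [Complex.norm_exp]
  apply Real.exp_le_exp.2
  have : (-(z^2*(t:ℂ)^2/2)) = ((-(t^2/2) : ℝ) : ℂ) * z^2 := by push_cast; ring
  rw [this, Complex.re_ofReal_mul]
  have h2 : -(z^2).re ≤ ‖z‖^2 := by
    calc -(z^2).re ≤ |(z^2).re| := neg_le_abs _
    _ ≤ ‖z^2‖ := Complex.abs_re_le_norm _
    _ = ‖z‖^2 := norm_pow _ _
  nlinarith [sq_nonneg t]

lemma hasDeriv_quad (t : ℝ) (z : ℂ) :
    HasDerivAt (fun z : ℂ => -(z^2*(t:ℂ)^2/2)) (-(z*(t:ℂ)^2)) z := by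
  have h := (((hasDerivAt_pow 2 z).mul_const ((t:ℂ)^2)).div_const 2).neg
  exact h.congr_deriv (by ring)

lemma meas_quad (z : ℂ) : Measurable (fun t : ℝ => Complex.exp (-(z^2*(t:ℂ)^2/2))) :=
  Complex.measurable_exp.comp
    ((((Complex.measurable_ofReal.pow_const 2).const_mul (z^2)).div_const 2).neg)

lemma norm_quad (z : ℂ) (s : ℝ) (hs : 0 ≤ s) : ‖-(z^2*(s:ℂ)^2/2)‖ = ‖z‖^2*s^2/2 := by
  rw [norm_neg, norm_div, norm_mul, norm_pow, norm_pow, Complex.norm_real, Real.norm_eq_abs,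
    _root_.abs_of_nonneg hs]
  norm_num
lemma diff_A (b : ℝ) (hb : 0 < b) (h : ℝ → ℝ) (hm : Measurable h) (M : ℝ)
    (hM : ∀ t ∈ Ioc (0:ℝ) b, |h t| ≤ M) :
    Differentiable ℂ (fun z => ∫ t in Ioc (0:ℝ) b,
      Complex.exp (-(z^2*(t:ℂ)^2/2)) * (h t : ℂ)) := by
  have hM0 : 0 ≤ M := le_trans (abs_nonneg _) (hM b ⟨hb, le_rfl⟩)
  intro z₀
  obtain ⟨R, hR⟩ : ∃ R : ℝ, R = ‖z₀‖ + 1 := ⟨_, rfl⟩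
  have hR0 : 0 ≤ R := by rw [hR]; positivity
  set F : ℂ → ℝ → ℂ := fun z t => Complex.exp (-(z^2*(t:ℂ)^2/2)) * (h t : ℂ) with hF
  set F' : ℂ → ℝ → ℂ :=
    fun z t => (Complex.exp (-(z^2*(t:ℂ)^2/2)) * (-(z*(t:ℂ)^2))) * (h t : ℂ) with hF'
  have hmeasF0 : ∀ z : ℂ, Measurable (F z) :=
    fun z => (meas_quad z).mul (Complex.measurable_ofReal.comp hm)
  have hmeasF : ∀ z : ℂ, AEStronglyMeasurable (F z) (volume.restrict (Ioc (0:ℝ) b)) :=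
    fun z => (hmeasF0 z).aestronglyMeasurable
  have hmeasF' : AEStronglyMeasurable (F' z₀) (volume.restrict (Ioc (0:ℝ) b)) := by
    apply Measurable.aestronglyMeasurable
    exact ((meas_quad z₀).mul
      (((Complex.measurable_ofReal.pow_const 2).const_mul z₀).neg)).mul
      (Complex.measurable_ofReal.comp hm)
  have hFint : IntegrableOn (F z₀) (Ioc (0:ℝ) b) volume := by
    apply Measure.integrableOn_of_bounded (M := Real.exp (‖z₀‖^2*b^2/2) * M)
      measure_Ioc_lt_top.ne (hmeasF0 z₀).aestronglyMeasurable
    rw [ae_restrict_iff' measurableSet_Ioc]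
    filter_upwards with t ht
    rw [hF, norm_mul, Complex.norm_real, Real.norm_eq_abs]
    have h1 := norm_cexp_quad z₀ t
    have h2 : Real.exp (‖z₀‖^2*t^2/2) ≤ Real.exp (‖z₀‖^2*b^2/2) := by
      apply Real.exp_le_exp.2
      have : t^2 ≤ b^2 := by nlinarith [ht.1, ht.2]
      nlinarith [sq_nonneg ‖z₀‖]
    have h3 := hM t ht
    have := Real.exp_pos (‖z₀‖^2*t^2/2)
    nlinarith [norm_nonneg (Complex.exp (-(z₀^2*(t:ℂ)^2/2))), abs_nonneg (h t)]
  have hbound : ∀ᵐ t ∂(volume.restrict (Ioc (0:ℝ) b)), ∀ z ∈ ball z₀ 1,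
      ‖F' z t‖ ≤ Real.exp (R^2*b^2/2) * (R*b^2*M) := by
    rw [ae_restrict_iff' measurableSet_Ioc]
    filter_upwards with t ht z hz
    have hzR : ‖z‖ ≤ R := by
      have := norm_sub_norm_le z z₀
      rw [mem_ball_iff_norm] at hz
      rw [hR]; linarith
    have htb : t^2 ≤ b^2 := by nlinarith [ht.1, ht.2]
    rw [hF', norm_mul, norm_mul, norm_neg, norm_mul, norm_pow, Complex.norm_real,
      Complex.norm_real, Real.norm_eq_abs, Real.norm_eq_abs]
    have h1 := norm_cexp_quad z t
    have h2 : Real.exp (‖z‖^2*t^2/2) ≤ Real.exp (R^2*b^2/2) := by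
      apply Real.exp_le_exp.2
      have p1 : ‖z‖^2 ≤ R^2 := pow_le_pow_left₀ (norm_nonneg z) hzR 2
      have p2 : ‖z‖^2*t^2 ≤ R^2*b^2 := mul_le_mul p1 htb (sq_nonneg t) (sq_nonneg R)
      linarith
    have h3 := hM t ht
    have e1 : ‖Complex.exp (-(z^2*(t:ℂ)^2/2))‖ ≤ Real.exp (R^2*b^2/2) := h1.trans h2
    have e2 : ‖z‖*|t|^2 ≤ R*b^2 := by
      rw [_root_.sq_abs]
      exact mul_le_mul hzR htb (sq_nonneg t) hR0
    calc ‖Complex.exp (-(z^2*(t:ℂ)^2/2))‖ * (‖z‖*|t|^2) * |h t|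
        ≤ (Real.exp (R^2*b^2/2) * (R*b^2)) * M := by
          apply mul_le_mul _ h3 (abs_nonneg _) (by positivity)
          exact mul_le_mul e1 e2 (by positivity) (Real.exp_pos _).le
      _ = Real.exp (R^2*b^2/2) * (R*b^2*M) := by ring
  have hdiff : ∀ᵐ t ∂(volume.restrict (Ioc (0:ℝ) b)), ∀ z ∈ ball z₀ 1, HasDerivAt (F · t) (F' z t) z := by
    filter_upwards with t z _
    exact ((hasDeriv_quad t z).cexp).mul_const _
  have key := hasDerivAt_integral_of_dominated_loc_of_deriv_le (ball_mem_nhds z₀ one_pos)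
    (Filter.Eventually.of_forall hmeasF) hFint hmeasF' hbound
    (integrableOn_const measure_Ioc_lt_top.ne) hdiff
  exact key.2.differentiableAt

lemma diff_Phi : Differentiable ℂ (fun z => ∫ s in Ioc (0:ℝ) 1,
    (Complex.exp (-(z^2*(s:ℂ)^2/2)) - 1) / (s:ℂ)) := by
  intro z₀
  obtain ⟨R, hR⟩ : ∃ R : ℝ, R = ‖z₀‖ + 1 := ⟨_, rfl⟩
  have hR0 : 0 ≤ R := by rw [hR]; positivity
  set F : ℂ → ℝ → ℂ := fun z s => (Complex.exp (-(z^2*(s:ℂ)^2/2)) - 1) / (s:ℂ) with hF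
  set F' : ℂ → ℝ → ℂ :=
    fun z s => (Complex.exp (-(z^2*(s:ℂ)^2/2)) * (-(z*(s:ℂ)^2))) / (s:ℂ) with hF'
  have hmeasF0 : ∀ z : ℂ, Measurable (F z) :=
    fun z => ((meas_quad z).sub measurable_const).div Complex.measurable_ofReal
  have hmeasF : ∀ z : ℂ, AEStronglyMeasurable (F z) (volume.restrict (Ioc (0:ℝ) 1)) :=
    fun z => (hmeasF0 z).aestronglyMeasurable
  have hmeasF' : AEStronglyMeasurable (F' z₀) (volume.restrict (Ioc (0:ℝ) 1)) := by
    apply Measurable.aestronglyMeasurable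
    exact (((meas_quad z₀).mul
      (((Complex.measurable_ofReal.pow_const 2).const_mul z₀).neg))).div
      Complex.measurable_ofReal
  have hc0 : (0:ℝ) ≤ ‖z₀‖^2 := sq_nonneg _
  have hFint : IntegrableOn (F z₀) (Ioc (0:ℝ) 1) volume := by
    apply Measure.integrableOn_of_bounded (M := ‖z₀‖^2/2 * Real.exp (‖z₀‖^2/2))
      measure_Ioc_lt_top.ne (hmeasF0 z₀).aestronglyMeasurable
    rw [ae_restrict_iff' measurableSet_Ioc]
    filter_upwards with s hs
    have hsn : ‖(s:ℂ)‖ = s := by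
      rw [Complex.norm_real, Real.norm_eq_abs, _root_.abs_of_pos hs.1]
    rw [hF, norm_div, hsn, div_le_iff₀ hs.1]
    have f4 : ‖Complex.exp (-(z₀^2*(s:ℂ)^2/2)) - 1‖
        ≤ (‖z₀‖^2*s^2/2) * Real.exp (‖z₀‖^2*s^2/2) := by
      have := norm_cexp_sub_one_le (-(z₀^2*(s:ℂ)^2/2))
      rwa [norm_quad z₀ s hs.1.le] at this
    have f5 : Real.exp (‖z₀‖^2*s^2/2) ≤ Real.exp (‖z₀‖^2/2) :=
      Real.exp_le_exp.2 (by nlinarith [hc0, hs.1, hs.2,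
        mul_le_mul_of_nonneg_left (by nlinarith [hs.1, hs.2] : s^2 ≤ 1) hc0])
    have f6 : ‖z₀‖^2*s^2/2 * Real.exp (‖z₀‖^2*s^2/2)
        ≤ ‖z₀‖^2*s^2/2 * Real.exp (‖z₀‖^2/2) :=
      mul_le_mul_of_nonneg_left f5 (by positivity)
    have f7 : ‖z₀‖^2*s^2/2 ≤ ‖z₀‖^2/2*s := by
      nlinarith [mul_nonneg hc0 (mul_nonneg hs.1.le (sub_nonneg.2 hs.2))]
    have f8 := mul_le_mul_of_nonneg_right f7 (Real.exp_pos (‖z₀‖^2/2)).le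
    nlinarith [f4, f6, f8]
  have hbound : ∀ᵐ s ∂(volume.restrict (Ioc (0:ℝ) 1)), ∀ z ∈ ball z₀ 1,
      ‖F' z s‖ ≤ Real.exp (R^2/2) * R := by
    rw [ae_restrict_iff' measurableSet_Ioc]
    filter_upwards with s hs z hz
    have hzR : ‖z‖ ≤ R := by
      have := norm_sub_norm_le z z₀
      rw [mem_ball_iff_norm] at hz
      rw [hR]; linarith
    have hsn : ‖(s:ℂ)‖ = s := by
      rw [Complex.norm_real, Real.norm_eq_abs, _root_.abs_of_pos hs.1]
    rw [hF', norm_div, norm_mul, norm_neg, norm_mul, norm_pow, hsn, div_le_iff₀ hs.1]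
    have e1 : ‖Complex.exp (-(z^2*(s:ℂ)^2/2))‖ ≤ Real.exp (R^2/2) := by
      refine (norm_cexp_quad z s).trans (Real.exp_le_exp.2 ?_)
      have p1 : ‖z‖^2 ≤ R^2 := pow_le_pow_left₀ (norm_nonneg z) hzR 2
      have p2 : ‖z‖^2*s^2 ≤ R^2*1 := mul_le_mul p1 (by nlinarith [hs.1, hs.2] : s^2 ≤ 1)
        (sq_nonneg s) (sq_nonneg R)
      linarith
    have q1 : ‖z‖*s^2 ≤ R*s := by
      nlinarith [mul_nonneg (sub_nonneg.2 hzR) (sq_nonneg s),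
        mul_nonneg hR0 (mul_nonneg hs.1.le (sub_nonneg.2 hs.2))]
    have q2 : ‖Complex.exp (-(z^2*(s:ℂ)^2/2))‖ * (‖z‖*s^2) ≤ Real.exp (R^2/2) * (R*s) :=
      mul_le_mul e1 q1 (by positivity) (Real.exp_pos _).le
    nlinarith [q2]
  have hdiff : ∀ᵐ s ∂(volume.restrict (Ioc (0:ℝ) 1)), ∀ z ∈ ball z₀ 1,
      HasDerivAt (F · s) (F' z s) z := by
    filter_upwards with s z _
    exact (((hasDeriv_quad s z).cexp).sub_const 1).div_const _
  have key := hasDerivAt_integral_of_dominated_loc_of_deriv_le (ball_mem_nhds z₀ one_pos)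
    (Filter.Eventually.of_forall hmeasF) hFint hmeasF' hbound
    (integrableOn_const measure_Ioc_lt_top.ne) hdiff
  exact key.2.differentiableAt

/-- For a smooth cutoff χ with values in [0,1], vanishing on [0,t₀] and
equal to 1 on [t₁,∞) (0 < t₀ < t₁), there exist δ > 0 and a real-analytic function g on
(−δ,δ) such that for all ε ∈ (0,δ),
∫₀^∞ e^{−ε²t²/2} χ(t)/t dt = log(1/ε) + g(ε). -/
theorem stmt17 (t₀ t₁ : ℝ) (h0 : 0 < t₀) (h01 : t₀ < t₁)
    (χ : ℝ → ℝ) (hχ : ContDiff ℝ (⊤ : ℕ∞) χ)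
    (hrange : ∀ t : ℝ, 0 ≤ t → χ t ∈ Set.Icc (0:ℝ) 1)
    (hzero : ∀ t ∈ Set.Icc (0:ℝ) t₀, χ t = 0)
    (hone : ∀ t : ℝ, t₁ ≤ t → χ t = 1) :
    ∃ δ : ℝ, 0 < δ ∧ ∃ g : ℝ → ℝ, AnalyticOnNhd ℝ g (Set.Ioo (-δ) δ) ∧
      ∀ ε ∈ Set.Ioo (0:ℝ) δ,
        (∫ t in Set.Ioi (0:ℝ), Real.exp (-ε^2*t^2/2) * χ t / t)
          = Real.log (1/ε) + g ε := by
  have ht1 : 0 < t₁ := h0.trans h01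
  have hχmeas : Measurable (fun t : ℝ => χ t / t) :=
    hχ.continuous.measurable.div measurable_id
  -- bound on χ t / t
  have hMχ : ∀ t ∈ Ioc (0:ℝ) t₁, |χ t / t| ≤ 1/t₀ := by
    intro t ht
    by_cases hle : t ≤ t₀
    · rw [hzero t ⟨ht.1.le, hle⟩]
      simp only [zero_div, abs_zero]
      positivity
    · push_neg at hle
      rw [abs_div, _root_.abs_of_pos ht.1]
      have h1 : |χ t| ≤ 1 := by
        have := hrange t ht.1.le
        rw [abs_le]; constructor <;> linarith [this.1, this.2]
      exact div_le_div₀ zero_le_one h1 h0 hle.le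
  have hχ01 : ∀ t : ℝ, 0 < t → 0 ≤ χ t ∧ χ t ≤ 1 := by
    intro t ht; exact ⟨(hrange t ht.le).1, (hrange t ht.le).2⟩
  -- the entire functions
  set Aℂ : ℂ → ℂ := fun z => ∫ t in Ioc (0:ℝ) t₁,
    Complex.exp (-(z^2*(t:ℂ)^2/2)) * ((χ t / t : ℝ) : ℂ) with hAdef
  set Φℂ : ℂ → ℂ := fun z => ∫ s in Ioc (0:ℝ) 1,
    (Complex.exp (-(z^2*(s:ℂ)^2/2)) - 1) / (s:ℂ) with hPdef
  have hAanal : AnalyticOnNhd ℂ Aℂ univ :=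
    (diff_A t₁ ht1 _ hχmeas (1/t₀) hMχ).differentiableOn.analyticOnNhd isOpen_univ
  have hPanal : AnalyticOnNhd ℂ Φℂ univ :=
    diff_Phi.differentiableOn.analyticOnNhd isOpen_univ
  -- real auxiliary functions
  set gg : ℝ → ℝ := fun u => Real.exp (-(u^2/2)) / u with hggdef
  set φ : ℝ → ℝ := fun u => (Real.exp (-(u^2/2)) - 1) / u with hφdef
  have hggmeas : Measurable gg := by
    apply Measurable.div _ measurable_id
    exact Real.measurable_exp.comp ((measurable_id.pow_const 2).div_const 2).neg
  have hφmeas : Measurable φ := by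
    apply Measurable.div _ measurable_id
    exact (Real.measurable_exp.comp ((measurable_id.pow_const 2).div_const 2).neg).sub
      measurable_const
  -- integrability of φ on Ioc 0 1
  have hφbd : ∀ u : ℝ, 0 < u → |φ u| ≤ u/2 := by
    intro u hu
    have he1 : Real.exp (-(u^2/2)) ≤ 1 := Real.exp_le_one_iff.2 (neg_nonpos_of_nonneg (by positivity))
    have he2 : 1 - Real.exp (-(u^2/2)) ≤ u^2/2 := by
      nlinarith [Real.add_one_le_exp (-(u^2/2))]
    rw [hφdef]
    simp only []
    rw [abs_div, _root_.abs_of_pos hu, abs_of_nonpos (by linarith : Real.exp (-(u^2/2)) - 1 ≤ 0),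
      div_le_iff₀ hu]
    nlinarith
  have hIntφ1 : IntegrableOn φ (Ioc (0:ℝ) 1) volume := by
    apply Measure.integrableOn_of_bounded (M := 1/2) measure_Ioc_lt_top.ne
      hφmeas.aestronglyMeasurable
    rw [ae_restrict_iff' measurableSet_Ioc]
    filter_upwards with u hu
    rw [Real.norm_eq_abs]
    have := hφbd u hu.1
    linarith [hu.2]
  -- the analytic function g
  refine ⟨t₁⁻¹, by positivity, fun x => (Aℂ (x:ℂ)).re - (Φℂ ((x*t₁ : ℝ):ℂ)).re +
    ((∫ u in Ioc (0:ℝ) 1, φ u) + (∫ u in Ioi (1:ℝ), gg u) - Real.log t₁), ?_, ?_⟩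
  · -- analyticity
    intro x _
    have hAx : AnalyticAt ℝ (fun y : ℝ => (Aℂ ((y:ℝ):ℂ)).re) x := by
      have h2 := (hAanal ((x:ℝ):ℂ) (mem_univ _)).restrictScalars (𝕜 := ℝ)
      exact (Complex.reCLM.analyticAt _).comp (h2.comp (Complex.ofRealCLM.analyticAt x))
    have hPx : AnalyticAt ℝ (fun y : ℝ => (Φℂ ((y*t₁ : ℝ):ℂ)).re) x := by
      have h2 := (hPanal ((x*t₁ : ℝ):ℂ) (mem_univ _)).restrictScalars (𝕜 := ℝ)
      have h3 : AnalyticAt ℝ (fun y : ℝ => ((y*t₁ : ℝ):ℂ)) x :=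
        (Complex.ofRealCLM.analyticAt _).comp (analyticAt_id.mul analyticAt_const)
      have h4 : AnalyticAt ℝ (fun y : ℝ => Φℂ ((y*t₁ : ℝ):ℂ)) x :=
        AnalyticAt.comp (f := fun y : ℝ => ((y*t₁ : ℝ):ℂ)) h2 h3
      exact (Complex.reCLM.analyticAt _).comp h4
    exact (hAx.sub hPx).add analyticAt_const
  · -- the identity
    rintro ε ⟨hε0, hε1⟩
    have hεne : ε ≠ 0 := hε0.ne'
    have hx0 : 0 < ε*t₁ := by positivity
    have hx1 : ε*t₁ ≤ 1 := by
      have h := mul_le_mul_of_nonneg_right hε1.le ht1.le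
      rwa [inv_mul_cancel₀ ht1.ne'] at h
    have hfmeas : Measurable (fun t : ℝ => Real.exp (-ε^2*t^2/2) * χ t / t) := by
      apply Measurable.div _ measurable_id
      exact (Real.measurable_exp.comp (by fun_prop)).mul hχ.continuous.measurable
    have hgauss2 : Integrable (fun t : ℝ => Real.exp (-(ε^2/2)*t^2)) volume :=
      integrable_exp_neg_mul_sq (by positivity)
    have hexpeq : ∀ t : ℝ, Real.exp (-ε^2*t^2/2) = Real.exp (-(ε^2/2)*t^2) :=
      fun t => congrArg Real.exp (by ring)
    have hInt1 : IntegrableOn (fun t => Real.exp (-ε^2*t^2/2) * χ t / t) (Ioc 0 t₁) volume := by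
      apply Measure.integrableOn_of_bounded (M := 1/t₀) measure_Ioc_lt_top.ne
        hfmeas.aestronglyMeasurable
      rw [ae_restrict_iff' measurableSet_Ioc]
      filter_upwards with t ht
      rw [Real.norm_eq_abs, mul_div_assoc, abs_mul]
      have e1 : |Real.exp (-ε^2*t^2/2)| ≤ 1 := by
        rw [_root_.abs_of_pos (Real.exp_pos _)]
        exact Real.exp_le_one_iff.2 (by nlinarith [sq_nonneg ε, sq_nonneg t])
      have e2 := hMχ t ht
      have := mul_le_mul e1 e2 (abs_nonneg _) zero_le_one
      linarith
    have hInt2 : IntegrableOn (fun t => Real.exp (-ε^2*t^2/2) * χ t / t) (Ioi t₁) volume := by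
      apply Integrable.mono' ((hgauss2.const_mul t₁⁻¹).integrableOn)
        hfmeas.aestronglyMeasurable
      rw [ae_restrict_iff' measurableSet_Ioi]
      filter_upwards with t ht
      have ht0 : 0 < t := ht1.trans ht
      rw [Real.norm_eq_abs, mul_div_assoc, abs_mul, abs_div, _root_.abs_of_pos ht0,
        _root_.abs_of_pos (Real.exp_pos _), hexpeq t]
      have hb1 : |χ t| ≤ 1 := by
        have := hrange t ht0.le
        rw [abs_le]; constructor <;> linarith [this.1, this.2]
      have hd : |χ t|/t ≤ 1/t₁ := div_le_div₀ zero_le_one hb1 ht1 ht.le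
      calc Real.exp (-(ε^2/2)*t^2) * (|χ t|/t) ≤ Real.exp (-(ε^2/2)*t^2) * (1/t₁) :=
            mul_le_mul_of_nonneg_left hd (Real.exp_pos _).le
        _ = t₁⁻¹ * Real.exp (-(ε^2/2)*t^2) := by rw [one_div]; ring
    have hIntgg : IntegrableOn gg (Ioi (ε*t₁)) volume := by
      apply Integrable.mono'
        (((integrable_exp_neg_mul_sq (by norm_num : (0:ℝ) < 1/2)).const_mul
          (ε*t₁)⁻¹).integrableOn) hggmeas.aestronglyMeasurable
      rw [ae_restrict_iff' measurableSet_Ioi]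
      filter_upwards with u hu
      have hu0 : 0 < u := hx0.trans hu
      rw [hggdef]
      simp only []
      rw [Real.norm_eq_abs, abs_div, _root_.abs_of_pos (Real.exp_pos _),
        _root_.abs_of_pos hu0, show -(u^2/2) = -(1/2)*u^2 by ring]
      calc Real.exp (-(1/2)*u^2) / u ≤ Real.exp (-(1/2)*u^2) / (ε*t₁) :=
            div_le_div₀ (Real.exp_pos _).le le_rfl hx0 hu.le
        _ = (ε*t₁)⁻¹ * Real.exp (-(1/2)*u^2) := by rw [div_eq_inv_mul]
    have hIntgg1 : IntegrableOn gg (Ioi (1:ℝ)) volume := hIntgg.mono_set (Ioi_subset_Ioi hx1)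
    have hIntggm : IntegrableOn gg (Ioc (ε*t₁) 1) volume := hIntgg.mono_set Ioc_subset_Ioi_self
    have hIntφx : IntegrableOn φ (Ioc (0:ℝ) (ε*t₁)) volume :=
      hIntφ1.mono_set (Ioc_subset_Ioc le_rfl hx1)
    have hIntφm : IntegrableOn φ (Ioc (ε*t₁) 1) volume :=
      hIntφ1.mono_set (Ioc_subset_Ioc hx0.le le_rfl)
    have hIntinv : IntegrableOn (fun u : ℝ => 1/u) (Ioc (ε*t₁) 1) volume := by
      apply Measure.integrableOn_of_bounded (M := (ε*t₁)⁻¹) measure_Ioc_lt_top.ne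
        ((measurable_const.div measurable_id : Measurable (fun u : ℝ => 1/u)) :
          Measurable (fun u : ℝ => 1/u)).aestronglyMeasurable
      rw [ae_restrict_iff' measurableSet_Ioc]
      filter_upwards with u hu
      simp only [Pi.div_apply]
      rw [Real.norm_eq_abs, abs_div, abs_one, _root_.abs_of_pos (hx0.trans hu.1),
        ← one_div (ε*t₁)]
      exact div_le_div₀ zero_le_one le_rfl hx0 hu.1.le
    -- step 1: split the integral
    have step1 : (∫ t in Ioi (0:ℝ), Real.exp (-ε^2*t^2/2) * χ t / t)
        = (∫ t in Ioc (0:ℝ) t₁, Real.exp (-ε^2*t^2/2) * χ t / t)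
        + ∫ t in Ioi t₁, Real.exp (-ε^2*t^2/2) * χ t / t := by
      rw [← Set.Ioc_union_Ioi_eq_Ioi ht1.le]
      exact setIntegral_union (Set.Ioc_disjoint_Ioi le_rfl) measurableSet_Ioi hInt1 hInt2
    -- step 2: the compactly supported part is (Aℂ ε).re
    have step2 : (∫ t in Ioc (0:ℝ) t₁, Real.exp (-ε^2*t^2/2) * χ t / t)
        = (Aℂ ((ε:ℝ):ℂ)).re := by
      have h2c : Aℂ ((ε:ℝ):ℂ)
          = ((∫ t in Ioc (0:ℝ) t₁, Real.exp (-ε^2*t^2/2) * χ t / t : ℝ) : ℂ) := by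
        simp only [hAdef]
        rw [setIntegral_congr_fun measurableSet_Ioc (g := fun t : ℝ =>
          ((Real.exp (-ε^2*t^2/2) * χ t / t : ℝ) : ℂ)) ?_]
        · exact integral_ofReal
        · intro t _
          dsimp only
          rw [show (-(((ε:ℝ):ℂ)^2*(t:ℂ)^2/2)) = ((-ε^2*t^2/2 : ℝ) : ℂ) by push_cast; ring,
            ← Complex.ofReal_exp]
          push_cast
          ring
      rw [h2c, Complex.ofReal_re]
    -- step 3: tail integral, change of variables
    have step3 : (∫ t in Ioi t₁, Real.exp (-ε^2*t^2/2) * χ t / t)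
        = ∫ u in Ioi (ε*t₁), gg u := by
      have e1 : EqOn (fun t => Real.exp (-ε^2*t^2/2) * χ t / t)
          (fun t => ε • gg (ε*t)) (Ioi t₁) := by
        intro t ht
        have ht0 : 0 < t := ht1.trans ht
        simp only [smul_eq_mul, hggdef]
        rw [hone t (le_of_lt ht), mul_one,
          show -((ε*t)^2/2) = -ε^2*t^2/2 by ring]
        field_simp
      rw [setIntegral_congr_fun measurableSet_Ioi e1, integral_smul,
        integral_comp_mul_left_Ioi gg t₁ hε0, smul_smul, mul_inv_cancel₀ hεne, one_smul]
    -- step 4: split the tail at 1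
    have step4 : (∫ u in Ioi (ε*t₁), gg u)
        = (∫ u in Ioc (ε*t₁) 1, gg u) + ∫ u in Ioi (1:ℝ), gg u := by
      rw [← Set.Ioc_union_Ioi_eq_Ioi hx1]
      exact setIntegral_union (Set.Ioc_disjoint_Ioi le_rfl) measurableSet_Ioi hIntggm hIntgg1
    -- step 5: split integrand
    have step5 : (∫ u in Ioc (ε*t₁) 1, gg u)
        = (∫ u in Ioc (ε*t₁) 1, φ u) + ∫ u in Ioc (ε*t₁) 1, (1:ℝ)/u := by
      rw [← integral_add hIntφm hIntinv]
      apply setIntegral_congr_fun measurableSet_Ioc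
      intro u hu
      simp only [hggdef, hφdef]
      rw [← add_div]
      norm_num
    -- step 6: logarithmic part
    have step6 : (∫ u in Ioc (ε*t₁) 1, (1:ℝ)/u) = - Real.log (ε*t₁) := by
      rw [← intervalIntegral.integral_of_le hx1, integral_one_div
        (by rw [Set.uIcc_of_le hx1]; rintro ⟨hh1, -⟩; exact absurd hh1 (not_le.2 hx0)),
        one_div, Real.log_inv]
    -- step 7
    have step7 : (∫ u in Ioc (ε*t₁) 1, φ u)
        = (∫ u in Ioc (0:ℝ) 1, φ u) - ∫ u in Ioc (0:ℝ) (ε*t₁), φ u := by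
      have hsum := setIntegral_union (Set.Ioc_disjoint_Ioc_of_le le_rfl) measurableSet_Ioc hIntφx hIntφm
      rw [Set.Ioc_union_Ioc_eq_Ioc hx0.le hx1] at hsum
      linarith [hsum]
    -- step 8
    have step8 : (∫ u in Ioc (0:ℝ) (ε*t₁), φ u) = (Φℂ ((ε*t₁ : ℝ):ℂ)).re := by
      have hcv := intervalIntegral.integral_comp_mul_left (a := (0:ℝ)) (b := (1:ℝ))
        (f := φ) (ne_of_gt hx0)
      rw [mul_zero, mul_one] at hcv
      have h2 : (∫ u in (0:ℝ)..(ε*t₁), φ u)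
          = (ε*t₁) • ∫ s in (0:ℝ)..(1:ℝ), φ ((ε*t₁)*s) := by
        rw [hcv, smul_smul, mul_inv_cancel₀ (ne_of_gt hx0), one_smul]
      have h3 : (∫ u in Ioc (0:ℝ) (ε*t₁), φ u)
          = ∫ s in Ioc (0:ℝ) 1, (ε*t₁) • φ ((ε*t₁)*s) := by
        rw [← intervalIntegral.integral_of_le hx0.le, h2, ← intervalIntegral.integral_smul,
          intervalIntegral.integral_of_le zero_le_one]
      have h4 : (∫ s in Ioc (0:ℝ) 1, (ε*t₁) • φ ((ε*t₁)*s))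
          = ∫ s in Ioc (0:ℝ) 1, (Real.exp (-((ε*t₁)^2*s^2/2)) - 1)/s := by
        apply setIntegral_congr_fun measurableSet_Ioc
        intro u hu
        simp only [smul_eq_mul, hφdef]
        rw [show -(((ε*t₁)*u)^2/2) = -((ε*t₁)^2*u^2/2) by ring]
        rw [mul_div_assoc', mul_div_mul_left _ _ (ne_of_gt hx0)]
      have h5 : Φℂ ((ε*t₁ : ℝ):ℂ)
          = ((∫ s in Ioc (0:ℝ) 1, (Real.exp (-((ε*t₁)^2*s^2/2)) - 1)/s : ℝ) : ℂ) := by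
        simp only [hPdef]
        rw [setIntegral_congr_fun measurableSet_Ioc (g := fun s : ℝ =>
          (((Real.exp (-((ε*t₁)^2*s^2/2)) - 1)/s : ℝ) : ℂ)) ?_]
        · exact integral_ofReal
        · intro s _
          dsimp only
          rw [show (-(((ε*t₁:ℝ):ℂ)^2*(s:ℂ)^2/2)) = ((-((ε*t₁)^2*s^2/2) : ℝ) : ℂ)
              by push_cast; ring, ← Complex.ofReal_exp]
          push_cast
          ring
      rw [h3, h4, h5, Complex.ofReal_re]
    rw [step1, step2, step3, step4, step5, step6, step7, step8,
      Real.log_mul hεne ht1.ne', one_div, Real.log_inv]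
    ring
end

section
/- For every ε > 0 the function ω ↦ e^{−ω²/2}/(−iε − ω) is Lebesgue integrable on ℝ, and as ε → 0⁺ one has (1/(2πi)) · ∫_ℝ e^{−ω²/2}/(−iε − ω) dω → 1/2 and (1/(2πi)) · ∫_ℝ e^{−ω²/2}/(iε − ω) dω → −1/2. (These limits are the boundary values G^r(0) = 1/2 and G^l(0) = −1/2 of the right and left variants of the Hilbert transform of the Gaussian.) -/
open Complex MeasureTheory

/-!
For an even integrable `g`, pairing `ω` with `-ω` gives
`∫ g ω / (i a - ω) = -i a ∫ g ω / (ω² + a²)`, so the odd (principal value) part drops out.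
The substitution `ω = ε t` turns `ε ∫ g ω / (ω² + ε²)` into the Poisson average
`∫ g (ε t) / (1 + t²)`, which tends to `π g 0` by dominated convergence. Hence for
`a = ±ε` the Cauchy transform of the Gaussian tends to `∓ i π`, and dividing by `2 π i`
gives `∓ 1/2`.
-/

open Filter Topology
open scoped Real

namespace Complex

lemma sub_ofReal_ne_zero {z : ℂ} (hz : z.im ≠ 0) (ω : ℝ) : z - ω ≠ 0 :=
  fun h => hz (by simpa using congrArg Complex.im h)

lemma norm_inv_sub_ofReal_le {z : ℂ} (hz : z.im ≠ 0) (ω : ℝ) : ‖(z - ω)⁻¹‖ ≤ |z.im|⁻¹ := by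
  have him : (z - ω).im = z.im := by simp
  rw [norm_inv]
  exact inv_anti₀ (abs_pos.2 hz) (him ▸ abs_im_le_norm _)

end Complex

section CauchyTransform

variable {g : ℝ → ℂ}

theorem MeasureTheory.Integrable.div_sub_ofReal (hg : Integrable g) {z : ℂ} (hz : z.im ≠ 0) :
    Integrable (fun ω : ℝ => g ω / (z - ω)) := by
  simp_rw [div_eq_mul_inv]
  refine hg.mul_bdd ?_ (Eventually.of_forall (norm_inv_sub_ofReal_le hz))
  exact ((continuous_const.sub continuous_ofReal).inv₀
    (sub_ofReal_ne_zero hz)).aestronglyMeasurable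

theorem integral_div_sub_ofReal_of_even (hg : Integrable g) (heven : ∀ ω, g (-ω) = g ω)
    {z : ℂ} (hz : z.im ≠ 0) :
    ∫ ω : ℝ, g ω / (z - ω) = z * ∫ ω : ℝ, g ω / (z ^ 2 - ω ^ 2) := by
  set f := fun ω : ℝ => g ω / (z - ω)
  have hsym : ∀ ω : ℝ, f ω + f (-ω) = 2 * z * (g ω / (z ^ 2 - ω ^ 2)) := by
    intro ω
    have h₁ := sub_ofReal_ne_zero hz ω
    have h₂ := sub_ofReal_ne_zero hz (-ω)
    push_cast at h₂
    have h₃ : z ^ 2 - (ω : ℂ) ^ 2 ≠ 0 := by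
      rw [sq_sub_sq]; exact mul_ne_zero (by simpa [sub_neg_eq_add, add_comm] using h₂) h₁
    simp only [f, heven]
    push_cast
    field_simp
    ring
  have hdouble : 2 * ∫ ω, f ω = 2 * (z * ∫ ω, g ω / (z ^ 2 - ω ^ 2)) :=
    calc 2 * ∫ ω, f ω = (∫ ω, f ω) + ∫ ω, f (-ω) := by rw [integral_neg_eq_self]; ring
      _ = ∫ ω, (f ω + f (-ω)) :=
        (integral_add (hg.div_sub_ofReal hz) (hg.div_sub_ofReal hz).comp_neg).symm
      _ = _ := by simp_rw [hsym, integral_const_mul]; ring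
  exact mul_left_cancel₀ two_ne_zero hdouble

theorem integral_div_I_mul_sub_of_even (hg : Integrable g) (heven : ∀ ω, g (-ω) = g ω)
    {a : ℝ} (ha : a ≠ 0) :
    ∫ ω : ℝ, g ω / (I * a - ω) = -(I * a) * ∫ ω : ℝ, g ω / (ω ^ 2 + a ^ 2) := by
  have hden : ∀ ω : ℝ, (I * a) ^ 2 - (ω : ℂ) ^ 2 = -((ω : ℂ) ^ 2 + a ^ 2) := fun ω => by
    rw [mul_pow, I_sq]; ring
  rw [integral_div_sub_ofReal_of_even hg heven (by simpa using ha)]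
  simp_rw [hden, div_neg, integral_neg, mul_neg, neg_mul]

lemma mul_integral_div_sq_add_sq_eq {ε : ℝ} (hε : 0 < ε) :
    (ε : ℂ) * ∫ ω : ℝ, g ω / (ω ^ 2 + ε ^ 2) = ∫ t : ℝ, g (ε * t) / (1 + t ^ 2) := by
  have hsubst :=
    Measure.integral_comp_mul_left (fun ω : ℝ => (ε : ℂ) ^ 2 * (g ω / (ω ^ 2 + ε ^ 2))) ε
  have hpt : ∀ t : ℝ, (ε : ℂ) ^ 2 * (g (ε * t) / (((ε * t : ℝ) : ℂ) ^ 2 + ε ^ 2))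
      = g (ε * t) / (1 + t ^ 2) := by
    intro t
    have h₁ : (1 + (t : ℂ) ^ 2) ≠ 0 := by exact_mod_cast (by positivity : (1 + t ^ 2 : ℝ) ≠ 0)
    have h₂ : (ε : ℂ) ≠ 0 := by exact_mod_cast hε.ne'
    rw [show ((ε * t : ℝ) : ℂ) ^ 2 + ε ^ 2 = ε ^ 2 * (1 + t ^ 2) by push_cast; ring]
    field_simp
  simp only [hpt, integral_const_mul, abs_inv, abs_of_pos hε] at hsubst
  rw [hsubst, Complex.real_smul]
  push_cast
  field_simp

theorem tendsto_mul_integral_div_sq_add_sq {C : ℝ} (hg : Continuous g) (hC : ∀ ω, ‖g ω‖ ≤ C) :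
    Tendsto (fun ε : ℝ => (ε : ℂ) * ∫ ω : ℝ, g ω / (ω ^ 2 + ε ^ 2)) (𝓝[>] 0) (𝓝 (π * g 0)) := by
  have hnorm : ∀ t : ℝ, ‖(1 + (t : ℂ) ^ 2)‖ = 1 + t ^ 2 := fun t => by
    rw [show (1 + (t : ℂ) ^ 2) = ((1 + t ^ 2 : ℝ) : ℂ) by push_cast; rfl, Complex.norm_real,
      Real.norm_of_nonneg (by positivity)]
  have hpos : ∀ t : ℝ, (1 + (t : ℂ) ^ 2) ≠ 0 := fun t =>
    norm_ne_zero_iff.1 (by rw [hnorm]; positivity)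
  have hlim : Tendsto (fun ε : ℝ => ∫ t : ℝ, g (ε * t) / (1 + t ^ 2)) (𝓝[>] 0)
      (𝓝 (∫ t : ℝ, g 0 / (1 + t ^ 2))) := by
    refine tendsto_integral_filter_of_dominated_convergence (fun t => C * (1 + t ^ 2)⁻¹)
      (Eventually.of_forall fun ε => ?_) (Eventually.of_forall fun ε => ?_)
      (integrable_inv_one_add_sq.const_mul C) (Eventually.of_forall fun t => ?_)
    · exact ((hg.comp (continuous_const.mul continuous_id)).div (by fun_prop)
        hpos).aestronglyMeasurable
    · refine Eventually.of_forall fun t => ?_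
      rw [norm_div, hnorm, div_eq_mul_inv]
      gcongr
      exact hC _
    · have hcont : Continuous fun ε : ℝ => g (ε * t) / (1 + t ^ 2) := by fun_prop
      simpa using (hcont.tendsto 0).mono_left nhdsWithin_le_nhds
  have hπ : ∫ t : ℝ, g 0 / (1 + t ^ 2) = π * g 0 := by
    have hinv : ∀ t : ℝ, (1 + (t : ℂ) ^ 2)⁻¹ = (((1 + t ^ 2)⁻¹ : ℝ) : ℂ) := fun t => by
      push_cast; rfl
    simp_rw [div_eq_mul_inv, hinv]
    rw [integral_const_mul, integral_complex_ofReal,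
      integral_univ_inv_one_add_sq, mul_comm]
  rw [hπ] at hlim
  refine hlim.congr' ?_
  filter_upwards [self_mem_nhdsWithin] with ε hε using (mul_integral_div_sq_add_sq_eq hε).symm

end CauchyTransform

lemma integrable_cexp_neg_sq_div_two : Integrable (fun ω : ℝ => cexp (-(ω : ℂ) ^ 2 / 2)) := by
  convert integrable_cexp_neg_mul_sq (b := 1 / 2) (by norm_num) using 3
  ring

lemma norm_cexp_neg_sq_div_two_le_one (ω : ℝ) : ‖cexp (-(ω : ℂ) ^ 2 / 2)‖ ≤ 1 := by
  rw [Complex.norm_exp, Real.exp_le_one_iff]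
  norm_cast
  nlinarith [sq_nonneg ω]

/-- For every ε > 0 the function ω ↦ e^{−ω²/2}/(∓iε − ω) is integrable on ℝ,
and as ε → 0⁺, (1/(2πi))∫ e^{−ω²/2}/(−iε−ω) dω → 1/2 and
(1/(2πi))∫ e^{−ω²/2}/(iε−ω) dω → −1/2 (the boundary values G^r(0) = 1/2, G^l(0) = −1/2). -/
theorem stmt18 :
    (∀ ε : ℝ, 0 < ε →
      Integrable (fun ω : ℝ => Complex.exp (-(ω:ℂ)^2/2) / (-(Complex.I*ε) - ω)) ∧
      Integrable (fun ω : ℝ => Complex.exp (-(ω:ℂ)^2/2) / (Complex.I*ε - ω))) ∧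
    Filter.Tendsto
      (fun ε : ℝ => (1/(2*(Real.pi:ℂ)*Complex.I))
        * ∫ ω : ℝ, Complex.exp (-(ω:ℂ)^2/2) / (-(Complex.I*ε) - ω))
      (nhdsWithin 0 (Set.Ioi 0)) (nhds (1/2 : ℂ)) ∧
    Filter.Tendsto
      (fun ε : ℝ => (1/(2*(Real.pi:ℂ)*Complex.I))
        * ∫ ω : ℝ, Complex.exp (-(ω:ℂ)^2/2) / (Complex.I*ε - ω))
      (nhdsWithin 0 (Set.Ioi 0)) (nhds (-(1/2) : ℂ)) := by
  set g : ℝ → ℂ := fun ω => cexp (-(ω : ℂ) ^ 2 / 2)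
  have hg : Integrable g := integrable_cexp_neg_sq_div_two
  have heven : ∀ ω, g (-ω) = g ω := fun ω => by simp [g]
  have hflip : ∀ ε : ℝ, -(I * ε) = I * ((-ε : ℝ) : ℂ) := fun ε => by push_cast; ring
  have hlim : Tendsto (fun ε : ℝ => (ε : ℂ) * (∫ ω : ℝ, g ω / (ω ^ 2 + ε ^ 2)) / (2 * π))
      (𝓝[>] 0) (𝓝 (1 / 2)) := by
    convert (tendsto_mul_integral_div_sq_add_sq (by fun_prop)
      norm_cexp_neg_sq_div_two_le_one).div_const (2 * (π : ℂ)) using 2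
    simp
    field_simp
  refine ⟨fun ε hε => ⟨?_, ?_⟩, hlim.congr' ?_, hlim.neg.congr' ?_⟩
  · rw [hflip]
    exact hg.div_sub_ofReal (by simpa using hε.ne')
  · exact hg.div_sub_ofReal (by simpa using hε.ne')
  all_goals
    filter_upwards [self_mem_nhdsWithin] with ε (hε : 0 < ε)
  · rw [hflip, integral_div_I_mul_sub_of_even hg heven (neg_ne_zero.2 hε.ne'),
      ofReal_neg, neg_sq]
    field_simp
  · rw [integral_div_I_mul_sub_of_even hg heven hε.ne']
    field_simp
end

section
/- Let ζ ∈ ℂ and ε > 0 with |Im ζ| < ε. Then both functions x ↦ e^{−(x−iε)²/2}/(ζ − (x − iε)) and x ↦ e^{−(x+iε)²/2}/(ζ − (x + iε)) are Lebesgue integrable on ℝ, and (1/(2πi)) · ∫_ℝ [ e^{−(x−iε)²/2}/(ζ − (x − iε)) − e^{−(x+iε)²/2}/(ζ − (x + iε)) ] dx = −e^{−ζ²/2}. -/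
/-!
Write `f w / (ζ - w) = f ζ / (ζ - w) - g w` with `g = dslope f ζ`, which is entire. By Cauchy's
theorem on the rectangle `[-R, R] × [-ε, ε]`, the integrals of `g` along the two horizontal sides
differ by the integrals along the vertical sides, and these tend to `0` because `f` is bounded on
the strip while `|w - ζ| ≥ R - |Re ζ|` there. The pole part is integrated with the principal
logarithm: `∫_{-R}^{R} (c - x)⁻¹ dx = log (c + R) - log (c - R)`, and `c - R` approaches the cut
from below or above according to the sign of `Im c`, so the integral tends to `∓πi`. Together the
two lines give `-2πi f(ζ)`.
-/

open Complex MeasureTheory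
open Filter Topology
open scoped Real

lemma tendsto_const_div_ofReal_atTop (c : ℂ) :
    Tendsto (fun R : ℝ => c / R) atTop (𝓝 0) := by
  have := ((continuous_ofReal.tendsto 0).comp tendsto_inv_atTop_zero).const_mul c
  simpa [Function.comp_def, div_eq_mul_inv] using this

lemma log_sub_ofReal_sub_log {c : ℂ} (hc : c.im ≠ 0) {R : ℝ} (hR : 0 < R) :
    log (c - R) - Real.log R = log (c / R - 1) := by
  have hR' : (R : ℂ) ≠ 0 := ofReal_ne_zero.mpr hR.ne'
  have hne : c / R - 1 ≠ 0 := fun h => hc (by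
    rw [sub_eq_zero, div_eq_one_iff_eq hR'] at h; simp [h])
  have h := log_ofReal_mul hR hne
  rw [mul_sub, mul_div_cancel₀ _ hR', mul_one] at h
  rw [h]
  ring

lemma log_add_ofReal_sub_log {c : ℂ} (hc : c.im ≠ 0) {R : ℝ} (hR : 0 < R) :
    log (c + R) - Real.log R = log (c / R + 1) := by
  have hR' : (R : ℂ) ≠ 0 := ofReal_ne_zero.mpr hR.ne'
  have hne : c / R + 1 ≠ 0 := fun h => hc (by
    rw [add_eq_zero_iff_eq_neg, div_eq_iff hR'] at h; simp [h])
  have h := log_ofReal_mul hR hne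
  rw [mul_add, mul_div_cancel₀ _ hR', mul_one] at h
  rw [h]
  ring

lemma tendsto_log_sub_ofReal_sub_log_of_im_neg {c : ℂ} (hc : c.im < 0) :
    Tendsto (fun R : ℝ => log (c - R) - Real.log R) atTop (𝓝 (-(π * I))) := by
  have hlim : Tendsto (fun R : ℝ => c / R - 1) atTop (𝓝[{z : ℂ | z.im < 0}] (-1)) := by
    refine tendsto_nhdsWithin_iff.mpr ⟨?_, ?_⟩
    · simpa using (tendsto_const_div_ofReal_atTop c).sub_const 1
    · filter_upwards [eventually_gt_atTop 0] with R hR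
      simpa [div_ofReal_im] using div_neg_of_neg_of_pos hc hR
  have := (tendsto_log_nhdsWithin_im_neg_of_re_neg_of_im_zero (z := -1) (by simp) (by simp)).comp
    hlim
  simp only [norm_neg, norm_one, Real.log_one, ofReal_zero, zero_sub] at this
  refine this.congr' ?_
  filter_upwards [eventually_gt_atTop 0] with R hR
  exact (log_sub_ofReal_sub_log hc.ne hR).symm

lemma tendsto_log_sub_ofReal_sub_log_of_im_pos {c : ℂ} (hc : 0 < c.im) :
    Tendsto (fun R : ℝ => log (c - R) - Real.log R) atTop (𝓝 (π * I)) := by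
  have hlim : Tendsto (fun R : ℝ => c / R - 1) atTop (𝓝[{z : ℂ | 0 ≤ z.im}] (-1)) := by
    refine tendsto_nhdsWithin_iff.mpr ⟨?_, ?_⟩
    · simpa using (tendsto_const_div_ofReal_atTop c).sub_const 1
    · filter_upwards [eventually_gt_atTop 0] with R hR
      simpa [div_ofReal_im] using (div_pos hc hR).le
  have := (tendsto_log_nhdsWithin_im_nonneg_of_re_neg_of_im_zero (z := -1) (by simp) (by simp)).comp
    hlim
  simp only [norm_neg, norm_one, Real.log_one, ofReal_zero, zero_add] at this
  refine this.congr' ?_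
  filter_upwards [eventually_gt_atTop 0] with R hR
  exact (log_sub_ofReal_sub_log hc.ne' hR).symm

lemma tendsto_log_add_ofReal_sub_log {c : ℂ} (hc : c.im ≠ 0) :
    Tendsto (fun R : ℝ => log (c + R) - Real.log R) atTop (𝓝 0) := by
  have hlim : Tendsto (fun R : ℝ => c / R + 1) atTop (𝓝 1) := by
    simpa using (tendsto_const_div_ofReal_atTop c).add_const 1
  have := ((continuousAt_clog (by simp)).tendsto.comp hlim)
  rw [log_one] at this
  refine this.congr' ?_
  filter_upwards [eventually_gt_atTop 0] with R hR
  exact (log_add_ofReal_sub_log hc hR).symm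

lemma intervalIntegrable_inv_sub_ofReal {c : ℂ} (hc : c.im ≠ 0) (a b : ℝ) :
    IntervalIntegrable (fun x : ℝ => (c - x)⁻¹) volume a b := by
  refine (continuous_const.sub continuous_ofReal).inv₀ (fun x h => hc ?_) |>.intervalIntegrable _ _
  simpa using congrArg im h

lemma integral_inv_sub_ofReal {c : ℂ} (hc : c.im ≠ 0) (a b : ℝ) :
    ∫ x in a..b, (c - x)⁻¹ = log (c - a) - log (c - b) := by
  have hmem : ∀ x : ℝ, c - x ∈ slitPlane := fun x =>
    mem_slitPlane_iff.mpr (Or.inr (by simpa using hc))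
  have hderiv : ∀ x : ℝ, HasDerivAt (fun t : ℝ => -log (c - t)) (c - x)⁻¹ x := fun x => by
    simpa [Pi.neg_def, neg_div, one_div] using
      (((hasDerivAt_id (x : ℂ)).const_sub c).clog (hmem x)).comp_ofReal.neg
  rw [intervalIntegral.integral_eq_sub_of_hasDerivAt (fun x _ => hderiv x)]
  · ring
  · exact intervalIntegrable_inv_sub_ofReal hc a b

lemma tendsto_integral_inv_sub_ofReal_of_im_pos {c : ℂ} (hc : 0 < c.im) :
    Tendsto (fun R : ℝ => ∫ x in -R..R, (c - x)⁻¹) atTop (𝓝 (-(π * I))) := by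
  have := (tendsto_log_add_ofReal_sub_log hc.ne').sub (tendsto_log_sub_ofReal_sub_log_of_im_pos hc)
  rw [zero_sub] at this
  refine this.congr fun R => ?_
  rw [integral_inv_sub_ofReal hc.ne', ofReal_neg, sub_neg_eq_add]
  ring

lemma tendsto_integral_inv_sub_ofReal_of_im_neg {c : ℂ} (hc : c.im < 0) :
    Tendsto (fun R : ℝ => ∫ x in -R..R, (c - x)⁻¹) atTop (𝓝 (π * I)) := by
  have := (tendsto_log_add_ofReal_sub_log hc.ne).sub (tendsto_log_sub_ofReal_sub_log_of_im_neg hc)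
  rw [zero_sub, neg_neg] at this
  refine this.congr fun R => ?_
  rw [integral_inv_sub_ofReal hc.ne, ofReal_neg, sub_neg_eq_add]
  ring

lemma div_sub_eq_mul_inv_sub_dslope {𝕜 : Type*} [NontriviallyNormedField 𝕜] (f : 𝕜 → 𝕜)
    {ζ w : 𝕜} (hw : w ≠ ζ) :
    f w / (ζ - w) = f ζ * (ζ - w)⁻¹ - dslope f ζ w := by
  have hw' : ζ - w ≠ 0 := sub_ne_zero.mpr hw.symm
  rw [dslope_of_ne f hw, slope_def_field, ← neg_sub ζ w]
  field_simp
  ring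

lemma integral_sub_integral_horizontal_eq {G : ℂ → ℂ} (hG : Differentiable ℂ G) (R ε : ℝ) :
    (∫ x in -R..R, G (x - I * ε)) - ∫ x in -R..R, G (x + I * ε) =
      I * (∫ y in -ε..ε, G ((-R : ℝ) + y * I)) - I * ∫ y in -ε..ε, G (R + y * I) := by
  have h := integral_boundary_rect_eq_zero_of_differentiableOn G ((-R : ℝ) + (-ε : ℝ) * I)
    (R + ε * I) hG.differentiableOn
  have hlower : ∀ x : ℝ, (x : ℂ) + (-ε : ℝ) * I = x - I * ε := fun x => by push_cast; ring
  have hupper : ∀ x : ℝ, (x : ℂ) + (ε : ℝ) * I = x + I * ε := fun x => by ring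
  have hz : ((-R : ℝ) + (-ε : ℝ) * I : ℂ).re = -R ∧ ((-R : ℝ) + (-ε : ℝ) * I : ℂ).im = -ε := by
    simp
  have hw : ((R : ℂ) + ε * I).re = R ∧ ((R : ℂ) + ε * I).im = ε := by simp
  rw [hz.1, hz.2, hw.1, hw.2] at h
  simp only [hlower, hupper, smul_eq_mul] at h
  linear_combination h

lemma tendsto_integral_dslope_vertical {f : ℂ → ℂ} {ζ : ℂ} {a b M : ℝ}
    (hM : ∀ z : ℂ, z.im ∈ Set.uIcc a b → ‖f z‖ ≤ M) :
    Tendsto (fun s : ℝ => ∫ y in a..b, dslope f ζ (s + y * I)) (cocompact ℝ) (𝓝 0) := by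
  have hdist : Tendsto (fun s : ℝ => |s| - |ζ.re|) (cocompact ℝ) atTop :=
    tendsto_atTop_add_const_right _ _ tendsto_norm_cocompact_atTop
  refine squeeze_zero_norm' (a := fun s => (M + ‖f ζ‖) / (|s| - |ζ.re|) * |b - a|) ?_ ?_
  · filter_upwards [hdist.eventually_gt_atTop 0] with s hs
    refine intervalIntegral.norm_integral_le_of_norm_le_const fun y hy => ?_
    have hre : |s| - |ζ.re| ≤ ‖s + y * I - ζ‖ := by
      calc |s| - |ζ.re| ≤ |s - ζ.re| := abs_sub_abs_le_abs_sub _ _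
        _ = |(s + y * I - ζ).re| := by simp
        _ ≤ ‖s + y * I - ζ‖ := abs_re_le_norm _
    have hne : s + y * I ≠ ζ := fun h => by simp [h] at hre; linarith
    rw [dslope_of_ne f hne, slope_def_field, norm_div]
    have hnum : ‖f (s + y * I) - f ζ‖ ≤ M + ‖f ζ‖ :=
      calc ‖f (s + y * I) - f ζ‖ ≤ ‖f (s + y * I)‖ + ‖f ζ‖ := norm_sub_le _ _
        _ ≤ M + ‖f ζ‖ := by
          gcongr
          exact hM _ (by simpa using Set.uIoc_subset_uIcc hy)
    exact div_le_div₀ ((norm_nonneg _).trans hnum) hnum hs hre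
  · simpa [div_eq_mul_inv] using (hdist.inv_tendsto_atTop.const_mul (M + ‖f ζ‖)).mul_const |b - a|

lemma intervalIntegral_div_sub_lower_sub_upper {f : ℂ → ℂ} (hf : Differentiable ℂ f) {ζ : ℂ}
    {ε : ℝ} (hζ : |ζ.im| < ε) (R : ℝ) :
    ∫ x in -R..R, (f (x - I * ε) / (ζ - (x - I * ε)) - f (x + I * ε) / (ζ - (x + I * ε))) =
      f ζ * ((∫ x in -R..R, (ζ + I * ε - x)⁻¹) - ∫ x in -R..R, (ζ - I * ε - x)⁻¹) -
        (I * (∫ y in -ε..ε, dslope f ζ ((-R : ℝ) + y * I)) -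
          I * ∫ y in -ε..ε, dslope f ζ (R + y * I)) := by
  obtain ⟨hlo, hhi⟩ := abs_lt.mp hζ
  set G := dslope f ζ
  have hG : Differentiable ℂ G := by
    rw [← differentiableOn_univ, differentiableOn_dslope univ_mem]
    exact hf.differentiableOn
  have hsplit : ∀ x : ℝ, f (x - I * ε) / (ζ - (x - I * ε)) - f (x + I * ε) / (ζ - (x + I * ε)) =
      f ζ * ((ζ + I * ε - x)⁻¹ - (ζ - I * ε - x)⁻¹) - (G (x - I * ε) - G (x + I * ε)) := by
    intro x
    have hne_lo : (x : ℂ) - I * ε ≠ ζ := fun h => by simp [← h] at hlo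
    have hne_hi : (x : ℂ) + I * ε ≠ ζ := fun h => by simp [← h] at hhi
    rw [div_sub_eq_mul_inv_sub_dslope f hne_lo, div_sub_eq_mul_inv_sub_dslope f hne_hi,
      show ζ - (x - I * ε) = ζ + I * ε - x by ring, show ζ - (x + I * ε) = ζ - I * ε - x by ring]
    ring
  have hG_lo : IntervalIntegrable (fun x : ℝ => G (x - I * ε)) volume (-R) R :=
    (hG.continuous.comp (continuous_ofReal.sub continuous_const)).intervalIntegrable _ _
  have hG_hi : IntervalIntegrable (fun x : ℝ => G (x + I * ε)) volume (-R) R :=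
    (hG.continuous.comp (continuous_ofReal.add continuous_const)).intervalIntegrable _ _
  have hp_hi := intervalIntegrable_inv_sub_ofReal (c := ζ + I * ε) (by simp; linarith) (-R) R
  have hp_lo := intervalIntegrable_inv_sub_ofReal (c := ζ - I * ε) (by simp; linarith) (-R) R
  rw [intervalIntegral.integral_congr fun x _ => hsplit x,
    intervalIntegral.integral_sub ((hp_hi.sub hp_lo).const_mul _) (hG_lo.sub hG_hi),
    intervalIntegral.integral_const_mul, intervalIntegral.integral_sub hp_hi hp_lo,
    intervalIntegral.integral_sub hG_lo hG_hi, integral_sub_integral_horizontal_eq hG]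

theorem integral_div_sub_lower_sub_upper_eq_neg_two_pi_I_mul {f : ℂ → ℂ}
    (hf : Differentiable ℂ f) {ζ : ℂ} {ε M : ℝ} (hζ : |ζ.im| < ε)
    (hM : ∀ z : ℂ, |z.im| ≤ ε → ‖f z‖ ≤ M)
    (h₁ : Integrable (fun x : ℝ => f (x - I * ε) / (ζ - (x - I * ε))))
    (h₂ : Integrable (fun x : ℝ => f (x + I * ε) / (ζ - (x + I * ε)))) :
    ∫ x : ℝ, (f (x - I * ε) / (ζ - (x - I * ε)) - f (x + I * ε) / (ζ - (x + I * ε))) =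
      -(2 * π * I) * f ζ := by
  obtain ⟨hlo, hhi⟩ := abs_lt.mp hζ
  have hupper := tendsto_integral_inv_sub_ofReal_of_im_pos (c := ζ + I * ε) (by simp; linarith)
  have hlower := tendsto_integral_inv_sub_ofReal_of_im_neg (c := ζ - I * ε) (by simp; linarith)
  have hV := tendsto_integral_dslope_vertical (ζ := ζ) (a := -ε) (b := ε) fun z hz =>
    hM z (abs_le.mpr (by rwa [Set.uIcc_of_le (by linarith)] at hz))
  have hvert := ((hV.comp (tendsto_neg_atTop_atBot.mono_right atBot_le_cocompact)).const_mul I).sub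
    ((hV.comp atTop_le_cocompact).const_mul I)
  have hlim := (((hupper.sub hlower).const_mul (f ζ)).sub hvert).congr fun R =>
    (intervalIntegral_div_sub_lower_sub_upper hf hζ R).symm
  refine tendsto_nhds_unique (intervalIntegral_tendsto_integral (h₁.sub h₂)
    tendsto_neg_atTop_atBot tendsto_id) hlim |>.trans ?_
  ring

lemma MeasureTheory.Integrable.div_sub_ofReal_add {g : ℝ → ℂ} (hg : Integrable g) {ζ c : ℂ}
    (hc : c.im ≠ ζ.im) : Integrable (fun x : ℝ => g x / (ζ - (x + c))) := by
  have hden : ∀ x : ℝ, |ζ.im - c.im| ≤ ‖ζ - (x + c)‖ := fun x => by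
    simpa using abs_im_le_norm (ζ - (x + c))
  have hpos : 0 < |ζ.im - c.im| := abs_pos.mpr (sub_ne_zero.mpr hc.symm)
  have hne : ∀ x : ℝ, ζ - (x + c) ≠ 0 := fun x => norm_pos_iff.mp (hpos.trans_le (hden x))
  refine hg.mul_bdd (c := |ζ.im - c.im|⁻¹) ?_ (Eventually.of_forall fun x => ?_)
  · exact ((continuous_const.sub (continuous_ofReal.add continuous_const)).inv₀ hne)
      |>.aestronglyMeasurable
  · rw [norm_inv]
    exact inv_anti₀ hpos (hden x)

lemma integrable_cexp_neg_sq_div_sub {ζ c : ℂ} (hc : c.im ≠ ζ.im) :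
    Integrable (fun x : ℝ => cexp (-(x + c) ^ 2 / 2) / (ζ - (x + c))) := by
  have hgauss : Integrable (fun x : ℝ => cexp (-(x + c) ^ 2 / 2)) := by
    convert integrable_cexp_quadratic (b := 1 / 2) (by norm_num) (-c) (-c ^ 2 / 2) using 3
    ring
  exact hgauss.div_sub_ofReal_add hc

lemma norm_cexp_neg_sq_div_two_le {ε : ℝ} {z : ℂ} (hz : |z.im| ≤ ε) :
    ‖cexp (-z ^ 2 / 2)‖ ≤ Real.exp (ε ^ 2 / 2) := by
  rw [norm_exp, Real.exp_le_exp]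
  have : z.im ^ 2 ≤ ε ^ 2 := sq_le_sq' (abs_le.mp hz).1 (abs_le.mp hz).2
  simp only [neg_div, neg_re, div_ofNat_re, sq, mul_re]
  nlinarith [mul_self_nonneg z.re]

theorem stmt19_general (ζ : ℂ) (ε : ℝ) (him : |ζ.im| < ε) :
    Integrable (fun x : ℝ =>
      Complex.exp (-((x:ℂ) - Complex.I*ε)^2/2) / (ζ - ((x:ℂ) - Complex.I*ε))) ∧
    Integrable (fun x : ℝ =>
      Complex.exp (-((x:ℂ) + Complex.I*ε)^2/2) / (ζ - ((x:ℂ) + Complex.I*ε))) ∧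
    (1/(2*(Real.pi:ℂ)*Complex.I))
      * (∫ x : ℝ,
          (Complex.exp (-((x:ℂ) - Complex.I*ε)^2/2) / (ζ - ((x:ℂ) - Complex.I*ε))
            - Complex.exp (-((x:ℂ) + Complex.I*ε)^2/2) / (ζ - ((x:ℂ) + Complex.I*ε))))
      = -Complex.exp (-ζ^2/2) := by
  obtain ⟨hlo, hhi⟩ := abs_lt.mp him
  have h₁ : Integrable (fun x : ℝ => cexp (-((x : ℂ) - I * ε) ^ 2 / 2) / (ζ - (x - I * ε))) := by
    simpa [← sub_eq_add_neg] using
      integrable_cexp_neg_sq_div_sub (ζ := ζ) (c := -(I * ε)) (by simp; linarith)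
  have h₂ := integrable_cexp_neg_sq_div_sub (ζ := ζ) (c := I * ε) (by simp; linarith)
  refine ⟨h₁, h₂, ?_⟩
  have hf : Differentiable ℂ fun z : ℂ => cexp (-z ^ 2 / 2) := by fun_prop
  rw [integral_div_sub_lower_sub_upper_eq_neg_two_pi_I_mul hf him
    (fun z hz => norm_cexp_neg_sq_div_two_le hz) h₁ h₂]
  field_simp

/-- For ζ ∈ ℂ and ε > 0 with |Im ζ| < ε, the Cauchy transforms of
e^{−ω²/2} along the lines ℝ ∓ iε are integrable and their difference satisfies the
residue identity
(1/(2πi))∫ [e^{−(x−iε)²/2}/(ζ−(x−iε)) − e^{−(x+iε)²/2}/(ζ−(x+iε))] dx = −e^{−ζ²/2}. -/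
theorem stmt19 (ζ : ℂ) (ε : ℝ) (hε : 0 < ε) (him : |ζ.im| < ε) :
    Integrable (fun x : ℝ =>
      Complex.exp (-((x:ℂ) - Complex.I*ε)^2/2) / (ζ - ((x:ℂ) - Complex.I*ε))) ∧
    Integrable (fun x : ℝ =>
      Complex.exp (-((x:ℂ) + Complex.I*ε)^2/2) / (ζ - ((x:ℂ) + Complex.I*ε))) ∧
    (1/(2*(Real.pi:ℂ)*Complex.I))
      * (∫ x : ℝ,
          (Complex.exp (-((x:ℂ) - Complex.I*ε)^2/2) / (ζ - ((x:ℂ) - Complex.I*ε))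
            - Complex.exp (-((x:ℂ) + Complex.I*ε)^2/2) / (ζ - ((x:ℂ) + Complex.I*ε))))
      = -Complex.exp (-ζ^2/2) :=
  stmt19_general ζ ε him
end
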